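/- arXiv:2502.06714 — 11 statements merged into one kernel-verified Lean document; each statement's English description precedes it below -/
import Mathlib

section
/- Let (V_x)_{x∈E} be subspaces of a finite-dimensional K-vector space V, and let (W₁,W₂,W₃) be three distinct lines in K² in general position (a linear representation of U_{2,3}). Define g on E×{1,2,3} by g(S) = dim(∑_{(x,i)∈S} V_x ⊗ W_i). Then for all A₁,A₂,A₃ ⊆ E, writing U_i = ∑_{x∈A_i} V_x and f(A) = dim(∑_{x∈A} V_x): g(A₁×{1} ∪ A₂×{2} ∪ A₃×{3}) = f(A₁) + f(A₂) + f(A₃) - dim(U₁ ∩ U₂ ∩ U₃). -/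
/-!
Write the three lines as `K ∙ u₀`, `K ∙ u₁`, `K ∙ (u₀ + u₁)` with `u₀, u₁` a basis of `K²`. Then
`U ⊗ (K ∙ u)` is the image of `U` under `v ↦ v ⊗ u`, and `(v₁, v₂) ↦ v₁ ⊗ u₀ + v₂ ⊗ u₁` embeds
`V × V` into `V ⊗ K²` (tensoring with `V` is exact). It carries `U₁ × U₂` onto
`U₁ ⊗ W₁ + U₂ ⊗ W₂` and the diagonal copy of `U₃` onto `U₃ ⊗ W₃`; these two meet in the diagonal
copy of `U₁ ∩ U₂ ∩ U₃`, so the dimension formula for a sum of two subspaces gives the claim.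
-/

open TensorProduct Module Submodule

section CommRing
variable {R V M : Type*} [CommRing R] [AddCommGroup V] [Module R V] [AddCommGroup M] [Module R M]

theorem range_map_subtype_eq_map_flip_mk (U : Submodule R V) {W : Submodule R M} {w : M}
    (hW : W = R ∙ w) :
    LinearMap.range (TensorProduct.map U.subtype W.subtype) =
      U.map ((TensorProduct.mk R V M).flip w) := by
  subst hW
  apply le_antisymm
  · rw [range_map_eq_span_tmul, span_le]
    rintro _ ⟨u, ⟨n, hn⟩, rfl⟩
    obtain ⟨c, rfl⟩ := mem_span_singleton.mp hn
    exact ⟨c • (u : V), U.smul_mem c u.2, by simp⟩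
  · rintro _ ⟨u, hu, rfl⟩
    exact ⟨⟨u, hu⟩ ⊗ₜ ⟨w, mem_span_singleton_self w⟩, rfl⟩

theorem injective_coprod_flip_mk [Module.Flat R V] {w₀ w₁ : M}
    (hw : LinearIndependent R ![w₀, w₁]) :
    Function.Injective (((TensorProduct.mk R V M).flip w₀).coprod
      ((TensorProduct.mk R V M).flip w₁)) := by
  set ℓ := (LinearMap.toSpanSingleton R M w₀).coprod (LinearMap.toSpanSingleton R M w₁)
  have hℓ : Function.Injective ℓ := by
    rw [← LinearMap.ker_eq_bot, LinearMap.ker_eq_bot']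
    rintro ⟨s, t⟩ h
    obtain ⟨rfl, rfl⟩ := LinearIndependent.pair_iff.mp hw s t h
    rfl
  set e : (V × V) ≃ₗ[R] V ⊗[R] (R × R) :=
    ((TensorProduct.rid R V).symm.prodCongr (TensorProduct.rid R V).symm).trans
      (TensorProduct.prodRight R R V R R).symm
  have hfactor : ((TensorProduct.mk R V M).flip w₀).coprod ((TensorProduct.mk R V M).flip w₁) =
      ℓ.lTensor V ∘ₗ e.toLinearMap := by
    ext v <;> simp [e, ℓ] <;> rw [← tmul_zero R v, prodRight_symm_tmul] <;> simp
  rw [hfactor, LinearMap.coe_comp]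
  exact (Module.Flat.lTensor_preserves_injective_linearMap ℓ hℓ).comp e.injective

end CommRing

section Field
variable {K V M : Type*} [Field K] [AddCommGroup V] [Module K V] [AddCommGroup M] [Module K M]

theorem Submodule.finrank_prod {V' : Type*} [AddCommGroup V'] [Module K V']
    [FiniteDimensional K V] [FiniteDimensional K V'] (p : Submodule K V) (q : Submodule K V') :
    finrank K (p.prod q) = finrank K p + finrank K q := by
  rw [← Module.finrank_prod]
  exact LinearEquiv.finrank_eq
    { toFun x := (⟨x.1.1, x.2.1⟩, ⟨x.1.2, x.2.2⟩)
      invFun y := ⟨(y.1, y.2), y.1.2, y.2.2⟩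
      map_add' _ _ := rfl
      map_smul' _ _ := rfl
      left_inv _ := rfl
      right_inv _ := rfl }

theorem Submodule.prod_inf_map_diag (U₁ U₂ U₃ : Submodule K V) :
    U₁.prod U₂ ⊓ U₃.map (LinearMap.id.prod LinearMap.id) =
      (U₁ ⊓ U₂ ⊓ U₃).map (LinearMap.id.prod LinearMap.id) := by
  apply le_antisymm
  · rintro _ ⟨⟨hv₁, hv₂⟩, v, hv₃, rfl⟩
    exact ⟨v, ⟨⟨hv₁, hv₂⟩, hv₃⟩, rfl⟩
  · rintro _ ⟨v, ⟨⟨hv₁, hv₂⟩, hv₃⟩, rfl⟩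
    exact ⟨⟨hv₁, hv₂⟩, v, hv₃, rfl⟩

theorem finrank_map_flip_mk_sup_add_finrank_inf [FiniteDimensional K V]
    (U₁ U₂ U₃ : Submodule K V) {w₀ w₁ : M} (hw : LinearIndependent K ![w₀, w₁]) :
    finrank K ↥(U₁.map ((TensorProduct.mk K V M).flip w₀) ⊔
        U₂.map ((TensorProduct.mk K V M).flip w₁) ⊔
        U₃.map ((TensorProduct.mk K V M).flip (w₀ + w₁))) + finrank K ↥(U₁ ⊓ U₂ ⊓ U₃) =
      finrank K U₁ + finrank K U₂ + finrank K U₃ := by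
  set Φ := ((TensorProduct.mk K V M).flip w₀).coprod ((TensorProduct.mk K V M).flip w₁)
  set Δ : V →ₗ[K] V × V := LinearMap.id.prod LinearMap.id
  have hΔ : Function.Injective Δ := fun x y h => congrArg Prod.fst h
  have hflip : (TensorProduct.mk K V M).flip (w₀ + w₁) = Φ ∘ₗ Δ := by
    ext v
    simp [Φ, Δ]
  have hsum : U₁.map ((TensorProduct.mk K V M).flip w₀) ⊔
      U₂.map ((TensorProduct.mk K V M).flip w₁) ⊔
      U₃.map ((TensorProduct.mk K V M).flip (w₀ + w₁)) = (U₁.prod U₂ ⊔ U₃.map Δ).map Φ := by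
    rw [Submodule.map_sup, LinearMap.map_coprod_prod, hflip, Submodule.map_comp]
  have hdim := finrank_sup_add_finrank_inf_eq (U₁.prod U₂) (U₃.map Δ)
  rw [prod_inf_map_diag, Submodule.finrank_prod, ← (equivMapOfInjective Δ hΔ _).finrank_eq,
    ← (equivMapOfInjective Δ hΔ _).finrank_eq] at hdim
  rw [hsum, ← (equivMapOfInjective Φ (injective_coprod_flip_mk hw) _).finrank_eq, hdim]

theorem exists_linearIndependent_span_eq_of_finrank_eq_two [FiniteDimensional K M]
    (hM : finrank K M = 2) (W : Fin 3 → Submodule K M) (hW1 : ∀ i, finrank K (W i) = 1)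
    (hWd : ∀ i j, i ≠ j → W i ≠ W j) :
    ∃ u₀ u₁ : M, LinearIndependent K ![u₀, u₁] ∧
      W 0 = K ∙ u₀ ∧ W 1 = K ∙ u₁ ∧ W 2 = K ∙ (u₀ + u₁) := by
  choose w hw0 hw using fun i =>
    (atom_iff_nonzero_span (W i)).mp (isAtom_iff_finrank_eq_one.mpr (hW1 i))
  have hnot : ∀ i j, i ≠ j → w j ∉ K ∙ w i := fun i j hij h =>
    hWd j i hij.symm <| eq_of_le_of_finrank_eq
      (by rw [hw i, hw j]; exact span_singleton_le_iff_mem _ _ |>.mpr h) (by rw [hW1, hW1])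
  have hind : LinearIndependent K ![w 0, w 1] :=
    (LinearIndependent.pair_iff' (hw0 0)).mpr fun a ha =>
      hnot 0 1 (by decide) (mem_span_singleton.mpr ⟨a, ha⟩)
  obtain ⟨a, b, hab⟩ : ∃ a b : K, a • w 0 + b • w 1 = w 2 := by
    rw [← mem_span_pair, ← Matrix.range_cons_cons_empty,
      hind.span_eq_top_of_card_eq_finrank (by simp [hM])]
    trivial
  have ha : a ≠ 0 := by
    rintro rfl
    exact hnot 1 2 (by decide) (mem_span_singleton.mpr ⟨b, by simpa using hab⟩)
  have hb : b ≠ 0 := by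
    rintro rfl
    exact hnot 0 2 (by decide) (mem_span_singleton.mpr ⟨a, by simpa using hab⟩)
  refine ⟨a • w 0, b • w 1,
    (LinearIndependent.pair_smul_smul_iff ha.isUnit hb.isUnit).mpr hind, ?_, ?_, ?_⟩
  · rw [hw 0, span_singleton_smul_eq ha.isUnit]
  · rw [hw 1, span_singleton_smul_eq hb.isUnit]
  · rw [hw 2, hab]

end Field

theorem iSup_mem_product_singleton {α E ι : Type*} [CompleteLattice α] (F : E × ι → α)
    (A : Finset E) (i : ι) : ⨆ p ∈ A ×ˢ {i}, F p = ⨆ x ∈ A, F (x, i) := by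
  simp [Finset.product_singleton, iSup_and, iSup_comm (ι := E × ι)]

theorem stmt_6 {K V : Type*} [Field K] [AddCommGroup V] [Module K V]
    [FiniteDimensional K V] {E : Type*} [DecidableEq E]
    (Vx : E → Submodule K V) (W : Fin 3 → Submodule K (Fin 2 → K))
    (hW1 : ∀ i, Module.finrank K ↥(W i) = 1)
    (hWd : ∀ i j, i ≠ j → W i ≠ W j)
    (f : Finset E → ℝ)
    (hf : ∀ A : Finset E, f A = Module.finrank K ↥(⨆ x ∈ A, Vx x))
    (g : Finset (E × Fin 3) → ℝ)
    (hg : ∀ S : Finset (E × Fin 3), g S = Module.finrank K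
      ↥(⨆ p ∈ S, LinearMap.range
          (TensorProduct.map (Vx p.1).subtype (W p.2).subtype)))
    (A₁ A₂ A₃ : Finset E) :
    g (A₁ ×ˢ {0} ∪ A₂ ×ˢ {1} ∪ A₃ ×ˢ {2}) =
      f A₁ + f A₂ + f A₃ -
        Module.finrank K ↥((⨆ x ∈ A₁, Vx x) ⊓ (⨆ x ∈ A₂, Vx x) ⊓ (⨆ x ∈ A₃, Vx x)) := by
  obtain ⟨u₀, u₁, hu, h₀, h₁, h₂⟩ :=
    exists_linearIndependent_span_eq_of_finrank_eq_two (by simp) W hW1 hWd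
  have hblock : ∀ (A : Finset E) (i : Fin 3) (u : Fin 2 → K), W i = K ∙ u →
      ⨆ p ∈ A ×ˢ {i}, LinearMap.range (TensorProduct.map (Vx p.1).subtype (W p.2).subtype) =
        (⨆ x ∈ A, Vx x).map ((TensorProduct.mk K V _).flip u) := by
    intro A i u hWi
    simp only [iSup_mem_product_singleton, range_map_subtype_eq_map_flip_mk _ hWi,
      Submodule.map_iSup]
  rw [hg, hf, hf, hf, Finset.iSup_union, Finset.iSup_union, hblock A₁ 0 u₀ h₀,
    hblock A₂ 1 u₁ h₁, hblock A₃ 2 _ h₂, eq_sub_iff_add_eq]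
  exact_mod_cast finrank_map_flip_mk_sup_add_finrank_inf _ _ _ hu
end

section
/- Let (E,f) be a polymatroid admitting a tensor product (E×{1,2,3}, g) with U_{2,3}. Then for all A₁,A₂,A₃ ⊆ E: g(A₁×{1} ∪ A₂×{2} ∪ A₃×{3}) ≥ max{ f(A₂A₃)+f(A₁), f(A₁A₃)+f(A₂), f(A₁A₂)+f(A₃) }. -/
open Finset

set_option linter.unusedSectionVars false

section
variable {E : Type*} [DecidableEq E]
variable (f : Finset E → ℝ) (g : Finset (E × Fin 3) → ℝ)
variable (hgmono : ∀ S T : Finset (E × Fin 3), S ⊆ T → g S ≤ g T)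
variable (hgsub : ∀ S T : Finset (E × Fin 3), g (S ∪ T) + g (S ∩ T) ≤ g S + g T)
variable (htp : ∀ (S : Finset E) (T : Finset (Fin 3)),
      g (S ×ˢ T) = f S * min (T.card : ℝ) 2)

include htp in
lemma g_single (S : Finset E) (i : Fin 3) :
    g (S ×ˢ ({i} : Finset (Fin 3))) = f S := by
  rw [htp]; norm_num

include htp in
lemma g_pair {i j : Fin 3} (hij : i ≠ j) (S : Finset E) :
    g (S ×ˢ ({i, j} : Finset (Fin 3))) = f S * 2 := by
  rw [htp, card_insert_of_notMem (by simp [hij]), card_singleton]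
  norm_num

include htp in
lemma g_univ (S : Finset E) :
    g (S ×ˢ (univ : Finset (Fin 3))) = f S * 2 := by
  rw [htp]; norm_num

include hgmono hgsub htp in
lemma free_add {i j k : Fin 3} (hij : i ≠ j) (P : Finset E)
    (T : Finset (E × Fin 3)) (hT : P ×ˢ ({i, j} : Finset (Fin 3)) ⊆ T) :
    g (T ∪ P ×ˢ ({k} : Finset (Fin 3))) = g T := by
  have h := hgsub T (P ×ˢ (univ : Finset (Fin 3)))
  have h1 := g_univ f g htp P
  have h2 := g_pair f g htp hij P
  have hsub1 : P ×ˢ ({i, j} : Finset (Fin 3)) ⊆ T ∩ P ×ˢ (univ : Finset (Fin 3)) :=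
    subset_inter hT (product_subset_product (Subset.refl _) (subset_univ _))
  have h3 : f P * 2 ≤ g (T ∩ P ×ˢ (univ : Finset (Fin 3))) := by
    rw [← h2]; exact hgmono _ _ hsub1
  have h4 : g (T ∪ P ×ˢ ({k} : Finset (Fin 3))) ≤ g (T ∪ P ×ˢ (univ : Finset (Fin 3))) :=
    hgmono _ _ (union_subset_union_right (product_subset_product (Subset.refl _) (subset_univ _)))
  have h5 : g T ≤ g (T ∪ P ×ˢ ({k} : Finset (Fin 3))) := hgmono _ _ subset_union_left
  linarith

include hgsub htp in
lemma two_copies {i j : Fin 3} (hij : i ≠ j) (P Q : Finset E) :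
    f P + f Q ≤ g (P ×ˢ ({i} : Finset (Fin 3)) ∪ Q ×ˢ ({j} : Finset (Fin 3))) := by
  have e1 : (P ×ˢ ({i} : Finset (Fin 3)) ∪ Q ×ˢ ({j} : Finset (Fin 3))) ∪ (P ∪ Q) ×ˢ ({i} : Finset (Fin 3))
      = (P ∪ Q) ×ˢ ({i} : Finset (Fin 3)) ∪ Q ×ˢ ({j} : Finset (Fin 3)) := by
    ext ⟨e, c⟩
    simp only [mem_union, mem_product, mem_singleton]
    tauto
  have e2 : (P ×ˢ ({i} : Finset (Fin 3)) ∪ Q ×ˢ ({j} : Finset (Fin 3))) ∩ (P ∪ Q) ×ˢ ({i} : Finset (Fin 3))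
      = P ×ˢ ({i} : Finset (Fin 3)) := by
    ext ⟨e, c⟩
    simp only [mem_inter, mem_union, mem_product, mem_singleton]
    constructor
    · rintro ⟨h1 | h1, h2⟩
      · exact h1
      · exact absurd (h1.2 ▸ h2.2) (Ne.symm hij)
    · intro h1; exact ⟨Or.inl h1, Or.inl h1.1, h1.2⟩
  have e3 : ((P ∪ Q) ×ˢ ({i} : Finset (Fin 3)) ∪ Q ×ˢ ({j} : Finset (Fin 3))) ∪ (P ∪ Q) ×ˢ ({j} : Finset (Fin 3))
      = (P ∪ Q) ×ˢ ({i, j} : Finset (Fin 3)) := by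
    ext ⟨e, c⟩
    simp only [mem_union, mem_product, mem_singleton, mem_insert]
    tauto
  have e4 : ((P ∪ Q) ×ˢ ({i} : Finset (Fin 3)) ∪ Q ×ˢ ({j} : Finset (Fin 3))) ∩ (P ∪ Q) ×ˢ ({j} : Finset (Fin 3))
      = Q ×ˢ ({j} : Finset (Fin 3)) := by
    ext ⟨e, c⟩
    simp only [mem_inter, mem_union, mem_product, mem_singleton]
    constructor
    · rintro ⟨h1 | h1, h2⟩
      · exact absurd (h1.2 ▸ h2.2) hij
      · exact h1
    · intro h1; exact ⟨Or.inr h1, Or.inr h1.1, h1.2⟩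
  have h1 := hgsub (P ×ˢ ({i} : Finset (Fin 3)) ∪ Q ×ˢ ({j} : Finset (Fin 3))) ((P ∪ Q) ×ˢ ({i} : Finset (Fin 3)))
  have h2 := hgsub ((P ∪ Q) ×ˢ ({i} : Finset (Fin 3)) ∪ Q ×ˢ ({j} : Finset (Fin 3))) ((P ∪ Q) ×ˢ ({j} : Finset (Fin 3)))
  rw [e1, e2] at h1
  rw [e3, e4] at h2
  have v1 := g_single f g htp P i
  have v2 := g_single f g htp (P ∪ Q) i
  have v3 := g_single f g htp Q j
  have v4 := g_single f g htp (P ∪ Q) j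
  have v5 := g_pair f g htp hij (P ∪ Q)
  linarith

include hgmono hgsub htp in
lemma key_lemma {i j k : Fin 3} (hij : i ≠ j) (hik : i ≠ k) (hjk : j ≠ k)
    {D W : Finset E} (hD : D ⊆ W) :
    f W + f D ≤ g (W ×ˢ ({i} : Finset (Fin 3)) ∪ D ×ˢ ({j, k} : Finset (Fin 3))) := by
  have e1 : (W ×ˢ ({i} : Finset (Fin 3)) ∪ D ×ˢ ({j, k} : Finset (Fin 3))) ∪ W ×ˢ ({i, j} : Finset (Fin 3))
      = W ×ˢ ({i, j} : Finset (Fin 3)) ∪ D ×ˢ ({k} : Finset (Fin 3)) := by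
    ext ⟨e, c⟩
    simp only [mem_union, mem_product, mem_singleton, mem_insert]
    constructor
    · rintro ((h | h) | h)
      · exact Or.inl ⟨h.1, Or.inl h.2⟩
      · rcases h.2 with h2 | h2
        · exact Or.inl ⟨hD h.1, Or.inr h2⟩
        · exact Or.inr ⟨h.1, h2⟩
      · exact Or.inl h
    · rintro (h | h)
      · exact Or.inr h
      · exact Or.inl (Or.inr ⟨h.1, Or.inr h.2⟩)
  have e2 : (W ×ˢ ({i} : Finset (Fin 3)) ∪ D ×ˢ ({j, k} : Finset (Fin 3))) ∩ W ×ˢ ({i, j} : Finset (Fin 3))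
      = W ×ˢ ({i} : Finset (Fin 3)) ∪ D ×ˢ ({j} : Finset (Fin 3)) := by
    ext ⟨e, c⟩
    simp only [mem_inter, mem_union, mem_product, mem_singleton, mem_insert]
    constructor
    · rintro ⟨h | h, h2⟩
      · exact Or.inl h
      · rcases h.2 with h3 | h3
        · exact Or.inr ⟨h.1, h3⟩
        · rcases h2.2 with h4 | h4
          · exact absurd (h3 ▸ h4) (Ne.symm hik)
          · exact absurd (h3 ▸ h4) (Ne.symm hjk)
    · rintro (h | h)
      · exact ⟨Or.inl h, h.1, Or.inl h.2⟩
      · exact ⟨Or.inr ⟨h.1, Or.inl h.2⟩, hD h.1, Or.inr h.2⟩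
  have h := hgsub (W ×ˢ ({i} : Finset (Fin 3)) ∪ D ×ˢ ({j, k} : Finset (Fin 3))) (W ×ˢ ({i, j} : Finset (Fin 3)))
  rw [e1, e2] at h
  have hfree : g (W ×ˢ ({i, j} : Finset (Fin 3)) ∪ D ×ˢ ({k} : Finset (Fin 3)))
      = g (W ×ˢ ({i, j} : Finset (Fin 3))) :=
    free_add f g hgmono hgsub htp hij D _ (product_subset_product hD (Subset.refl _))
  have hv : g (W ×ˢ ({i, j} : Finset (Fin 3))) = f W * 2 := g_pair f g htp hij W
  have htc : f W + f D ≤ g (W ×ˢ ({i} : Finset (Fin 3)) ∪ D ×ˢ ({j} : Finset (Fin 3))) :=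
    two_copies f g hgsub htp hij W D
  linarith

include hgmono hgsub htp in
lemma main_lemma {i j k : Fin 3} (hij : i ≠ j) (hik : i ≠ k) (hjk : j ≠ k)
    (A B C : Finset E) :
    f A + f (B ∪ C) ≤
      g (A ×ˢ ({i} : Finset (Fin 3)) ∪ B ×ˢ ({j} : Finset (Fin 3)) ∪ C ×ˢ ({k} : Finset (Fin 3))) := by
  set M : Finset E := A ∪ B ∪ C with hM
  set D : Finset E := B ∪ C with hDdef
  have hAM : A ⊆ M := by intro x hx; simp [hM, hx]
  have hBM : B ⊆ M := by intro x hx; simp [hM, hx]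
  have hCM : C ⊆ M := by intro x hx; simp [hM, hx]
  have hDM : D ⊆ M := by intro x hx; simp only [hDdef, mem_union] at hx; rcases hx with h | h <;> simp [hM, h]
  -- step 1 : submodularity against M×{i}
  have m1 : (A ×ˢ ({i} : Finset (Fin 3)) ∪ B ×ˢ ({j} : Finset (Fin 3)) ∪ C ×ˢ ({k} : Finset (Fin 3)))
        ∪ M ×ˢ ({i} : Finset (Fin 3))
      = M ×ˢ ({i} : Finset (Fin 3)) ∪ B ×ˢ ({j} : Finset (Fin 3)) ∪ C ×ˢ ({k} : Finset (Fin 3)) := by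
    ext ⟨e, c⟩
    simp only [mem_union, mem_product, mem_singleton]
    constructor
    · rintro (((h | h) | h) | h)
      · exact Or.inl (Or.inl ⟨hAM h.1, h.2⟩)
      · exact Or.inl (Or.inr h)
      · exact Or.inr h
      · exact Or.inl (Or.inl h)
    · rintro ((h | h) | h)
      · exact Or.inr h
      · exact Or.inl (Or.inl (Or.inr h))
      · exact Or.inl (Or.inr h)
  have m2 : (A ×ˢ ({i} : Finset (Fin 3)) ∪ B ×ˢ ({j} : Finset (Fin 3)) ∪ C ×ˢ ({k} : Finset (Fin 3)))
        ∩ M ×ˢ ({i} : Finset (Fin 3))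
      = A ×ˢ ({i} : Finset (Fin 3)) := by
    ext ⟨e, c⟩
    simp only [mem_inter, mem_union, mem_product, mem_singleton]
    constructor
    · rintro ⟨(h | h) | h, h2⟩
      · exact h
      · exact absurd (h.2 ▸ h2.2) (Ne.symm hij)
      · exact absurd (h.2 ▸ h2.2) (Ne.symm hik)
    · intro h; exact ⟨Or.inl (Or.inl h), hAM h.1, h.2⟩
  have h0 := hgsub (A ×ˢ ({i} : Finset (Fin 3)) ∪ B ×ˢ ({j} : Finset (Fin 3)) ∪ C ×ˢ ({k} : Finset (Fin 3)))
      (M ×ˢ ({i} : Finset (Fin 3)))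
  rw [m1, m2] at h0
  -- step 2 : free additions
  have fa1 : g ((M ×ˢ ({i} : Finset (Fin 3)) ∪ B ×ˢ ({j} : Finset (Fin 3)) ∪ C ×ˢ ({k} : Finset (Fin 3)))
        ∪ C ×ˢ ({j} : Finset (Fin 3)))
      = g (M ×ˢ ({i} : Finset (Fin 3)) ∪ B ×ˢ ({j} : Finset (Fin 3)) ∪ C ×ˢ ({k} : Finset (Fin 3))) := by
    refine free_add f g hgmono hgsub htp hik C _ ?_
    intro ⟨e, c⟩ h
    simp only [mem_product, mem_insert, mem_singleton] at h
    simp only [mem_union, mem_product, mem_singleton]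
    rcases h.2 with h2 | h2
    · exact Or.inl (Or.inl ⟨hCM h.1, h2⟩)
    · exact Or.inr ⟨h.1, h2⟩
  have m3 : (M ×ˢ ({i} : Finset (Fin 3)) ∪ B ×ˢ ({j} : Finset (Fin 3)) ∪ C ×ˢ ({k} : Finset (Fin 3)))
        ∪ C ×ˢ ({j} : Finset (Fin 3))
      = M ×ˢ ({i} : Finset (Fin 3)) ∪ D ×ˢ ({j} : Finset (Fin 3)) ∪ C ×ˢ ({k} : Finset (Fin 3)) := by
    ext ⟨e, c⟩
    simp only [mem_union, mem_product, mem_singleton, hDdef]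
    tauto
  have fa2 : g ((M ×ˢ ({i} : Finset (Fin 3)) ∪ D ×ˢ ({j} : Finset (Fin 3)) ∪ C ×ˢ ({k} : Finset (Fin 3)))
        ∪ B ×ˢ ({k} : Finset (Fin 3)))
      = g (M ×ˢ ({i} : Finset (Fin 3)) ∪ D ×ˢ ({j} : Finset (Fin 3)) ∪ C ×ˢ ({k} : Finset (Fin 3))) := by
    refine free_add f g hgmono hgsub htp hij B _ ?_
    intro ⟨e, c⟩ h
    simp only [mem_product, mem_insert, mem_singleton] at h
    simp only [mem_union, mem_product, mem_singleton]
    rcases h.2 with h2 | h2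
    · exact Or.inl (Or.inl ⟨hBM h.1, h2⟩)
    · exact Or.inl (Or.inr ⟨by simp [hDdef, h.1], h2⟩)
  have m4 : (M ×ˢ ({i} : Finset (Fin 3)) ∪ D ×ˢ ({j} : Finset (Fin 3)) ∪ C ×ˢ ({k} : Finset (Fin 3)))
        ∪ B ×ˢ ({k} : Finset (Fin 3))
      = M ×ˢ ({i} : Finset (Fin 3)) ∪ D ×ˢ ({j, k} : Finset (Fin 3)) := by
    ext ⟨e, c⟩
    simp only [mem_union, mem_product, mem_singleton, mem_insert, hDdef]
    tauto
  have hkey : f M + f D ≤ g (M ×ˢ ({i} : Finset (Fin 3)) ∪ D ×ˢ ({j, k} : Finset (Fin 3))) :=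
    key_lemma f g hgmono hgsub htp hij hik hjk hDM
  have vA := g_single f g htp A i
  have vM := g_single f g htp M i
  rw [m3] at fa1
  rw [m4] at fa2
  linarith

end



theorem stmt_8 {E : Type*} [DecidableEq E]
    (f : Finset E → ℝ) (g : Finset (E × Fin 3) → ℝ)
    (hf0 : f ∅ = 0)
    (hfmono : ∀ S T : Finset E, S ⊆ T → f S ≤ f T)
    (hfsub : ∀ S T : Finset E, f (S ∪ T) + f (S ∩ T) ≤ f S + f T)
    (hg0 : g ∅ = 0)
    (hgmono : ∀ S T : Finset (E × Fin 3), S ⊆ T → g S ≤ g T)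
    (hgsub : ∀ S T : Finset (E × Fin 3), g (S ∪ T) + g (S ∩ T) ≤ g S + g T)
    (htp : ∀ (S : Finset E) (T : Finset (Fin 3)),
      g (S ×ˢ T) = f S * min (T.card : ℝ) 2)
    (A₁ A₂ A₃ : Finset E) :
    g (A₁ ×ˢ {0} ∪ A₂ ×ˢ {1} ∪ A₃ ×ˢ {2}) ≥
      max (f (A₂ ∪ A₃) + f A₁) (max (f (A₁ ∪ A₃) + f A₂) (f (A₁ ∪ A₂) + f A₃)) := by
  have h1 := main_lemma f g hgmono hgsub htp (i := 0) (j := 1) (k := 2)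
    (by decide) (by decide) (by decide) A₁ A₂ A₃
  have h2 := main_lemma f g hgmono hgsub htp (i := 1) (j := 0) (k := 2)
    (by decide) (by decide) (by decide) A₂ A₁ A₃
  have h3 := main_lemma f g hgmono hgsub htp (i := 2) (j := 0) (k := 1)
    (by decide) (by decide) (by decide) A₃ A₁ A₂
  have e2 : A₂ ×ˢ ({1} : Finset (Fin 3)) ∪ A₁ ×ˢ ({0} : Finset (Fin 3)) ∪ A₃ ×ˢ ({2} : Finset (Fin 3))
      = A₁ ×ˢ ({0} : Finset (Fin 3)) ∪ A₂ ×ˢ ({1} : Finset (Fin 3)) ∪ A₃ ×ˢ ({2} : Finset (Fin 3)) := by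
    ac_rfl
  have e3 : A₃ ×ˢ ({2} : Finset (Fin 3)) ∪ A₁ ×ˢ ({0} : Finset (Fin 3)) ∪ A₂ ×ˢ ({1} : Finset (Fin 3))
      = A₁ ×ˢ ({0} : Finset (Fin 3)) ∪ A₂ ×ˢ ({1} : Finset (Fin 3)) ∪ A₃ ×ˢ ({2} : Finset (Fin 3)) := by
    ac_rfl
  rw [e2] at h2
  rw [e3] at h3
  rw [ge_iff_le, max_le_iff]
  refine ⟨by linarith, ?_⟩
  rw [max_le_iff]
  exact ⟨by linarith, by linarith⟩
end

section
/- Let (E,f) be a polymatroid admitting a tensor product (E×{1,2,3}, g) with U_{2,3}. Then for all A₁,A₂,A₃ ⊆ E: g(A₁×{1} ∪ A₂×{2} ∪ A₃×{3}) ≤ min{ f(A₁)+f(A₂)+f(A₃), f(A₂A₃)+f(A₁A₃)+f(A₁A₂) - f(A₁A₂A₃) }. -/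
set_option maxHeartbeats 2000000

/-- Subadditivity of a nonnegative submodular function. -/
lemma aux_subadd {E : Type*} [DecidableEq E]
    (g : Finset (E × Fin 3) → ℝ)
    (hg0 : g ∅ = 0)
    (hgmono : ∀ S T : Finset (E × Fin 3), S ⊆ T → g S ≤ g T)
    (hgsub : ∀ S T : Finset (E × Fin 3), g (S ∪ T) + g (S ∩ T) ≤ g S + g T)
    (S T : Finset (E × Fin 3)) : g (S ∪ T) ≤ g S + g T := by
  have h1 := hgsub S T
  have h2 : g ∅ ≤ g (S ∩ T) := hgmono _ _ (Finset.empty_subset _)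
  linarith [h2, h1]

/-- Closure lemma: if Z contains two columns of C, adding a third column of C
    does not increase g. -/
lemma aux_clos {E : Type*} [DecidableEq E]
    (f : Finset E → ℝ) (g : Finset (E × Fin 3) → ℝ)
    (hgmono : ∀ S T : Finset (E × Fin 3), S ⊆ T → g S ≤ g T)
    (hgsub : ∀ S T : Finset (E × Fin 3), g (S ∪ T) + g (S ∩ T) ≤ g S + g T)
    (htp : ∀ (S : Finset E) (T : Finset (Fin 3)),
      g (S ×ˢ T) = f S * min (T.card : ℝ) 2)
    (C : Finset E) (Z : Finset (E × Fin 3)) (j k l : Fin 3) (hjk : j ≠ k)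
    (hZ : C ×ˢ ({j, k} : Finset (Fin 3)) ⊆ Z) :
    g (Z ∪ C ×ˢ ({l} : Finset (Fin 3))) ≤ g Z := by
  have hcard2 : (({j, k} : Finset (Fin 3)).card : ℝ) = 2 := by
    rw [Finset.card_insert_of_notMem (by simpa using hjk), Finset.card_singleton]
    norm_num
  have hsub3 : ({j, k} : Finset (Fin 3)) ⊆ ({j, k, l} : Finset (Fin 3)) := by
    intro x hx; simp at hx ⊢; tauto
  have hcard3 : (2 : ℝ) ≤ (({j, k, l} : Finset (Fin 3)).card : ℝ) := by
    rw [← hcard2]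
    exact_mod_cast Finset.card_le_card hsub3
  have hJK : g (C ×ˢ ({j, k} : Finset (Fin 3))) = 2 * f C := by
    rw [htp, hcard2]; norm_num; ring
  have hT : g (C ×ˢ ({j, k, l} : Finset (Fin 3))) = 2 * f C := by
    rw [htp, min_eq_right hcard3]; ring
  have hmain := hgsub Z (C ×ˢ ({j, k, l} : Finset (Fin 3)))
  have hinter : C ×ˢ ({j, k} : Finset (Fin 3)) ⊆ Z ∩ C ×ˢ ({j, k, l} : Finset (Fin 3)) := by
    refine Finset.subset_inter hZ ?_
    exact Finset.product_subset_product_right hsub3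
  have h1 : 2 * f C ≤ g (Z ∩ C ×ˢ ({j, k, l} : Finset (Fin 3))) := by
    rw [← hJK]; exact hgmono _ _ hinter
  have h2 : g (Z ∪ C ×ˢ ({l} : Finset (Fin 3))) ≤ g (Z ∪ C ×ˢ ({j, k, l} : Finset (Fin 3))) := by
    apply hgmono
    apply Finset.union_subset_union_right
    apply Finset.product_subset_product_right
    intro x hx; simp at hx ⊢; tauto
  linarith [hmain, h1, h2, hT]

theorem stmt_9 {E : Type*} [DecidableEq E]
    (f : Finset E → ℝ) (g : Finset (E × Fin 3) → ℝ)
    (hf0 : f ∅ = 0)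
    (hfmono : ∀ S T : Finset E, S ⊆ T → f S ≤ f T)
    (hfsub : ∀ S T : Finset E, f (S ∪ T) + f (S ∩ T) ≤ f S + f T)
    (hg0 : g ∅ = 0)
    (hgmono : ∀ S T : Finset (E × Fin 3), S ⊆ T → g S ≤ g T)
    (hgsub : ∀ S T : Finset (E × Fin 3), g (S ∪ T) + g (S ∩ T) ≤ g S + g T)
    (htp : ∀ (S : Finset E) (T : Finset (Fin 3)),
      g (S ×ˢ T) = f S * min (T.card : ℝ) 2)
    (A₁ A₂ A₃ : Finset E) :
    g (A₁ ×ˢ {0} ∪ A₂ ×ˢ {1} ∪ A₃ ×ˢ {2}) ≤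
      min (f A₁ + f A₂ + f A₃)
        (f (A₂ ∪ A₃) + f (A₁ ∪ A₃) + f (A₁ ∪ A₂) - f (A₁ ∪ A₂ ∪ A₃)) := by
  have hsing : ∀ (B : Finset E) (j : Fin 3), g (B ×ˢ ({j} : Finset (Fin 3))) = f B := by
    intro B j
    rw [htp]
    norm_num
  set U : Finset E := A₁ ∪ A₂ ∪ A₃ with hU
  set X : Finset (E × Fin 3) := A₁ ×ˢ {0} ∪ A₂ ×ˢ {1} ∪ A₃ ×ˢ {2} with hX
  -- First bound : g X ≤ f A₁ + f A₂ + f A₃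
  have hb1 : g X ≤ f A₁ + f A₂ + f A₃ := by
    calc g X ≤ g (A₁ ×ˢ {0} ∪ A₂ ×ˢ {1}) + g (A₃ ×ˢ {2}) :=
          aux_subadd g hg0 hgmono hgsub _ _
      _ ≤ g (A₁ ×ˢ {0}) + g (A₂ ×ˢ {1}) + g (A₃ ×ˢ {2}) := by
          linarith [aux_subadd g hg0 hgmono hgsub (A₁ ×ˢ ({0} : Finset (Fin 3))) (A₂ ×ˢ ({1} : Finset (Fin 3)))]
      _ = f A₁ + f A₂ + f A₃ := by rw [hsing, hsing, hsing]
  -- Second bound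
  set S : Finset (E × Fin 3) := A₁ ×ˢ {0} ∪ U ×ˢ {1} ∪ A₃ ×ˢ {2} with hS
  set Z : Finset (E × Fin 3) := (A₁ ∪ A₂) ×ˢ {0} ∪ A₂ ×ˢ {1} ∪ (A₂ ∪ A₃) ×ˢ {2} with hZ
  set W : Finset (E × Fin 3) := (A₁ ∪ A₂) ×ˢ {0} ∪ U ×ˢ {1} ∪ (A₂ ∪ A₃) ×ˢ {2} with hW
  -- main submodularity: g W + g X ≤ g S + g Z
  have hSZ : S ∪ Z = W := by
    ext x
    simp only [hS, hZ, hW, hU, Finset.mem_union, Finset.mem_product,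
      Finset.mem_singleton]
    tauto
  have hXSZ : X ⊆ S ∩ Z := by
    rw [Finset.subset_inter_iff]
    constructor <;>
    · intro x hx
      simp only [hX, hS, hZ, hU, Finset.mem_union, Finset.mem_product,
        Finset.mem_singleton] at hx ⊢
      tauto
  have hmain : g W + g X ≤ g S + g Z := by
    have := hgsub S Z
    rw [hSZ] at this
    linarith [hgmono _ _ hXSZ]
  -- bound g S ≤ f (A₁ ∪ A₃) + f U
  have hbS : g S ≤ f (A₁ ∪ A₃) + f U := by
    have h1 : S ⊆ ((A₁ ∪ A₃) ×ˢ {0} ∪ U ×ˢ {1}) ∪ A₃ ×ˢ ({2} : Finset (Fin 3)) := by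
      intro x hx
      simp only [hS, hU, Finset.mem_union, Finset.mem_product, Finset.mem_singleton] at hx ⊢
      tauto
    have h2 : A₃ ×ˢ ({0, 1} : Finset (Fin 3)) ⊆ (A₁ ∪ A₃) ×ˢ {0} ∪ U ×ˢ {1} := by
      intro x hx
      simp only [hU, Finset.mem_union, Finset.mem_product, Finset.mem_singleton,
        Finset.mem_insert] at hx ⊢
      tauto
    calc g S ≤ g (((A₁ ∪ A₃) ×ˢ {0} ∪ U ×ˢ {1}) ∪ A₃ ×ˢ ({2} : Finset (Fin 3))) :=
          hgmono _ _ h1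
      _ ≤ g ((A₁ ∪ A₃) ×ˢ {0} ∪ U ×ˢ {1}) :=
          aux_clos f g hgmono hgsub htp A₃ _ 0 1 2 (by decide) h2
      _ ≤ g ((A₁ ∪ A₃) ×ˢ ({0} : Finset (Fin 3))) + g (U ×ˢ ({1} : Finset (Fin 3))) :=
          aux_subadd g hg0 hgmono hgsub _ _
      _ = f (A₁ ∪ A₃) + f U := by rw [hsing, hsing]
  -- bound g Z ≤ f (A₁ ∪ A₂) + f (A₂ ∪ A₃)
  have hbZ : g Z ≤ f (A₁ ∪ A₂) + f (A₂ ∪ A₃) := by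
    have h1 : Z ⊆ ((A₁ ∪ A₂) ×ˢ {0} ∪ (A₂ ∪ A₃) ×ˢ {2}) ∪ A₂ ×ˢ ({1} : Finset (Fin 3)) := by
      intro x hx
      simp only [hZ, Finset.mem_union, Finset.mem_product, Finset.mem_singleton] at hx ⊢
      tauto
    have h2 : A₂ ×ˢ ({0, 2} : Finset (Fin 3)) ⊆ (A₁ ∪ A₂) ×ˢ {0} ∪ (A₂ ∪ A₃) ×ˢ {2} := by
      intro x hx
      simp only [Finset.mem_union, Finset.mem_product, Finset.mem_singleton,
        Finset.mem_insert] at hx ⊢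
      tauto
    calc g Z ≤ g (((A₁ ∪ A₂) ×ˢ {0} ∪ (A₂ ∪ A₃) ×ˢ {2}) ∪ A₂ ×ˢ ({1} : Finset (Fin 3))) :=
          hgmono _ _ h1
      _ ≤ g ((A₁ ∪ A₂) ×ˢ {0} ∪ (A₂ ∪ A₃) ×ˢ {2}) :=
          aux_clos f g hgmono hgsub htp A₂ _ 0 2 1 (by decide) h2
      _ ≤ g ((A₁ ∪ A₂) ×ˢ ({0} : Finset (Fin 3))) + g ((A₂ ∪ A₃) ×ˢ ({2} : Finset (Fin 3))) :=
          aux_subadd g hg0 hgmono hgsub _ _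
      _ = f (A₁ ∪ A₂) + f (A₂ ∪ A₃) := by rw [hsing, hsing]
  -- bound 2 f U ≤ g W
  have hbW : 2 * f U ≤ g W := by
    have h2 : (A₂ ∪ A₃) ×ˢ ({1, 2} : Finset (Fin 3)) ⊆ W := by
      intro x hx
      simp only [hW, hU, Finset.mem_union, Finset.mem_product, Finset.mem_singleton,
        Finset.mem_insert] at hx ⊢
      tauto
    have h3 : U ×ˢ ({0, 1} : Finset (Fin 3)) ⊆ W ∪ (A₂ ∪ A₃) ×ˢ ({0} : Finset (Fin 3)) := by
      intro x hx
      simp only [hW, hU, Finset.mem_union, Finset.mem_product, Finset.mem_singleton,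
        Finset.mem_insert] at hx ⊢
      tauto
    have hcard : g (U ×ˢ ({0, 1} : Finset (Fin 3))) = 2 * f U := by
      rw [htp]
      norm_num
      ring
    calc 2 * f U = g (U ×ˢ ({0, 1} : Finset (Fin 3))) := hcard.symm
      _ ≤ g (W ∪ (A₂ ∪ A₃) ×ˢ ({0} : Finset (Fin 3))) := hgmono _ _ h3
      _ ≤ g W := aux_clos f g hgmono hgsub htp (A₂ ∪ A₃) _ 1 2 0 (by decide) h2
  have hb2 : g X ≤ f (A₂ ∪ A₃) + f (A₁ ∪ A₃) + f (A₁ ∪ A₂) - f (A₁ ∪ A₂ ∪ A₃) := by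
    have : f (A₁ ∪ A₂ ∪ A₃) = f U := by rw [hU]
    linarith [hmain, hbS, hbZ, hbW]
  exact le_min hb1 hb2
end

section
/- Every linearly representable polymatroid satisfies Ingleton's inequality: if f(X) = dim(∑_{x∈X} V_x) for subspaces (V_x)_{x∈E} of a finite-dimensional vector space, then for all A,B,C,D ⊆ E, f(AB)+f(AC)+f(BC)+f(AD)+f(BD) ≥ f(A)+f(B)+f(ABC)+f(ABD)+f(CD). -/
open Module Submodule

private lemma ingleton_sub {K V : Type*} [Field K] [AddCommGroup V] [Module K V]
    [FiniteDimensional K V] (A B C D : Submodule K V) :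
    (finrank K ↥(A ⊔ B) : ℝ) + finrank K ↥(A ⊔ C) + finrank K ↥(B ⊔ C) +
      finrank K ↥(A ⊔ D) + finrank K ↥(B ⊔ D) ≥
    (finrank K ↥A : ℝ) + finrank K ↥B + finrank K ↥(A ⊔ B ⊔ C) +
      finrank K ↥(A ⊔ B ⊔ D) + finrank K ↥(C ⊔ D) := by
  have key : ∀ X Y : Submodule K V,
      (finrank K ↥(X ⊔ Y) : ℝ) + finrank K ↥(X ⊓ Y) = finrank K ↥X + finrank K ↥Y := by
    intro X Y
    have := Submodule.finrank_sup_add_finrank_inf_eq X Y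
    exact_mod_cast congrArg (Nat.cast : ℕ → ℝ) this
  have mono : ∀ X Y : Submodule K V, X ≤ Y →
      (finrank K ↥X : ℝ) ≤ finrank K ↥Y := by
    intro X Y h
    exact_mod_cast Submodule.finrank_mono h
  have k1 := key A B
  have k2 := key A C
  have k3 := key B C
  have k4 := key A D
  have k5 := key B D
  have k6 := key C D
  have k7 := key (A ⊔ B) C
  have k8 := key (A ⊔ B) D
  -- L with Z = C : dim(A⊓C)+dim(B⊓C) ≤ dim((A⊔B)⊓C) + dim((A⊓C)⊓(B⊓C))
  have k9 := key (A ⊓ C) (B ⊓ C)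
  have m9 : (finrank K ↥((A ⊓ C) ⊔ (B ⊓ C)) : ℝ) ≤ finrank K ↥((A ⊔ B) ⊓ C) :=
    mono _ _ (sup_le (inf_le_inf_right C le_sup_left) (inf_le_inf_right C le_sup_right))
  have k10 := key (A ⊓ D) (B ⊓ D)
  have m10 : (finrank K ↥((A ⊓ D) ⊔ (B ⊓ D)) : ℝ) ≤ finrank K ↥((A ⊔ B) ⊓ D) :=
    mono _ _ (sup_le (inf_le_inf_right D le_sup_left) (inf_le_inf_right D le_sup_right))
  -- step 3 : dim(P⊓C)+dim(P⊓D) ≤ dim P + dim (C⊓D) with P = A⊓B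
  have k11 := key ((A ⊓ B) ⊓ C) ((A ⊓ B) ⊓ D)
  have m11 : (finrank K ↥(((A ⊓ B) ⊓ C) ⊔ ((A ⊓ B) ⊓ D)) : ℝ) ≤ finrank K ↥(A ⊓ B) :=
    mono _ _ (sup_le inf_le_left inf_le_left)
  have m12 : (finrank K ↥(((A ⊓ B) ⊓ C) ⊓ ((A ⊓ B) ⊓ D)) : ℝ) ≤ finrank K ↥(C ⊓ D) :=
    mono _ _ (le_inf (le_trans inf_le_left inf_le_right)
      (le_trans inf_le_right inf_le_right))
  -- bridge t_C ≤ dim(A⊓B⊓C) etc.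
  have m13 : (finrank K ↥((A ⊓ C) ⊓ (B ⊓ C)) : ℝ) ≤ finrank K ↥((A ⊓ B) ⊓ C) :=
    mono _ _ (le_inf (inf_le_inf inf_le_left inf_le_left)
      (le_trans inf_le_left inf_le_right))
  have m14 : (finrank K ↥((A ⊓ D) ⊓ (B ⊓ D)) : ℝ) ≤ finrank K ↥((A ⊓ B) ⊓ D) :=
    mono _ _ (le_inf (inf_le_inf inf_le_left inf_le_left)
      (le_trans inf_le_left inf_le_right))
  linarith

theorem stmt_11 {K V : Type*} [Field K] [AddCommGroup V] [Module K V]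
    [FiniteDimensional K V] {E : Type*} [DecidableEq E]
    (Vx : E → Submodule K V)
    (f : Finset E → ℝ)
    (hf : ∀ X : Finset E, f X = Module.finrank K ↥(⨆ x ∈ X, Vx x))
    (A B C D : Finset E) :
    f (A ∪ B) + f (A ∪ C) + f (B ∪ C) + f (A ∪ D) + f (B ∪ D) ≥
      f A + f B + f (A ∪ B ∪ C) + f (A ∪ B ∪ D) + f (C ∪ D) := by
  have hsup : ∀ X Y : Finset E,
      (⨆ x ∈ X ∪ Y, Vx x) = (⨆ x ∈ X, Vx x) ⊔ ⨆ x ∈ Y, Vx x := by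
    intro X Y
    simp [Finset.mem_union, iSup_or, iSup_sup_eq]
  simp only [hf]
  rw [hsup A B, hsup A C, hsup B C, hsup A D, hsup B D, hsup C D,
    hsup (A ∪ B) C, hsup (A ∪ B) D, hsup A B]
  exact ingleton_sub (⨆ x ∈ A, Vx x) (⨆ x ∈ B, Vx x) (⨆ x ∈ C, Vx x) (⨆ x ∈ D, Vx x)
end

section
/- Let (E,f) be a polymatroid admitting a tensor product (E×{1,2,3},g) with U_{2,3}, and fix X,Y ⊆ E. Define an extension to E ∪ {z} (z a new element) by f(A ∪ {z}) = g(X×{1} ∪ Y×{2} ∪ A×{3}) - f(X∪Y) for every A ⊆ E. Then f(z) = f(X)+f(Y)-f(X∪Y), f(X∪{z}) = f(X), and f(Y∪{z}) = f(Y). -/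
private lemma gval1 {E : Type*} [DecidableEq E]
    (f : Finset E → ℝ) (g : Finset (E × Fin 3) → ℝ)
    (htp : ∀ (S : Finset E) (T : Finset (Fin 3)),
      g (S ×ˢ T) = f S * min (T.card : ℝ) 2)
    (S : Finset E) (i : Fin 3) : g (S ×ˢ {i}) = f S := by
  rw [htp, Finset.card_singleton]
  norm_num

private lemma gval2 {E : Type*} [DecidableEq E]
    (f : Finset E → ℝ) (g : Finset (E × Fin 3) → ℝ)
    (htp : ∀ (S : Finset E) (T : Finset (Fin 3)),
      g (S ×ˢ T) = f S * min (T.card : ℝ) 2)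
    (S : Finset E) (i j : Fin 3) (hij : i ≠ j) :
    g (S ×ˢ {i, j}) = 2 * f S := by
  rw [htp, Finset.card_insert_of_notMem (by simpa using hij), Finset.card_singleton]
  norm_num [mul_comm]

private lemma gval3 {E : Type*} [DecidableEq E]
    (f : Finset E → ℝ) (g : Finset (E × Fin 3) → ℝ)
    (htp : ∀ (S : Finset E) (T : Finset (Fin 3)),
      g (S ×ˢ T) = f S * min (T.card : ℝ) 2)
    (S : Finset E) (i j k : Fin 3) (hij : i ≠ j) (hik : i ≠ k) (hjk : j ≠ k) :
    g (S ×ˢ {i, j, k}) = 2 * f S := by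
  have hc : ({i, j, k} : Finset (Fin 3)).card = 3 := by
    rw [Finset.card_insert_of_notMem (by simp [hij, hik]),
      Finset.card_insert_of_notMem (by simpa using hjk), Finset.card_singleton]
  rw [htp, hc]
  norm_num [mul_comm]

/-- If two copies `S ×ˢ {i,j}` are inside `W`, adding the third copy is free. -/
private lemma collapse_aux {E : Type*} [DecidableEq E]
    (f : Finset E → ℝ) (g : Finset (E × Fin 3) → ℝ)
    (hgmono : ∀ S T : Finset (E × Fin 3), S ⊆ T → g S ≤ g T)
    (hgsub : ∀ S T : Finset (E × Fin 3), g (S ∪ T) + g (S ∩ T) ≤ g S + g T)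
    (htp : ∀ (S : Finset E) (T : Finset (Fin 3)),
      g (S ×ˢ T) = f S * min (T.card : ℝ) 2)
    (S : Finset E) (i j k : Fin 3) (hij : i ≠ j) (hik : i ≠ k) (hjk : j ≠ k)
    (W : Finset (E × Fin 3)) (hW : S ×ˢ ({i, j} : Finset (Fin 3)) ⊆ W) :
    g (W ∪ S ×ˢ {k}) = g W := by
  have h2 : g (S ×ˢ ({i, j} : Finset (Fin 3))) = 2 * f S := gval2 f g htp S i j hij
  have h3 : g (S ×ˢ ({i, j, k} : Finset (Fin 3))) = 2 * f S := gval3 f g htp S i j k hij hik hjk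
  have hsplit : (S ×ˢ ({i, j, k} : Finset (Fin 3))) =
      S ×ˢ ({i, j} : Finset (Fin 3)) ∪ S ×ˢ ({k} : Finset (Fin 3)) := by
    ext ⟨e, r⟩
    simp [Finset.mem_product]
    aesop
  have hU : W ∪ S ×ˢ ({i, j, k} : Finset (Fin 3)) = W ∪ S ×ˢ {k} := by
    rw [hsplit, ← Finset.union_assoc, Finset.union_eq_left.mpr hW]
  have hI : S ×ˢ ({i, j} : Finset (Fin 3)) ⊆ W ∩ S ×ˢ ({i, j, k} : Finset (Fin 3)) :=
    Finset.subset_inter hW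
      (Finset.product_subset_product_right (by intro r hr; simp at hr ⊢; tauto))
  have hsub := hgsub W (S ×ˢ ({i, j, k} : Finset (Fin 3)))
  have hIg : 2 * f S ≤ g (W ∩ S ×ˢ ({i, j, k} : Finset (Fin 3))) := by
    rw [← h2]; exact hgmono _ _ hI
  have hle : g (W ∪ S ×ˢ {k}) ≤ g W := by
    rw [hU, h3] at hsub; linarith
  exact le_antisymm hle (hgmono _ _ Finset.subset_union_left)

set_option maxHeartbeats 2000000 in
theorem stmt_12 {E : Type*} [DecidableEq E]
    (f : Finset E → ℝ) (g : Finset (E × Fin 3) → ℝ)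
    (hf0 : f ∅ = 0)
    (hfmono : ∀ S T : Finset E, S ⊆ T → f S ≤ f T)
    (hfsub : ∀ S T : Finset E, f (S ∪ T) + f (S ∩ T) ≤ f S + f T)
    (hg0 : g ∅ = 0)
    (hgmono : ∀ S T : Finset (E × Fin 3), S ⊆ T → g S ≤ g T)
    (hgsub : ∀ S T : Finset (E × Fin 3), g (S ∪ T) + g (S ∩ T) ≤ g S + g T)
    (htp : ∀ (S : Finset E) (T : Finset (Fin 3)),
      g (S ×ˢ T) = f S * min (T.card : ℝ) 2)
    (X Y : Finset E)
    (h : Finset (Option E) → ℝ)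
    (hh : ∀ S : Finset (Option E), h S =
      if none ∈ S then
        g (X ×ˢ {0} ∪ Y ×ˢ {1} ∪ S.eraseNone ×ˢ {2}) - f (X ∪ Y)
      else f S.eraseNone) :
    h {none} = f X + f Y - f (X ∪ Y) ∧
    h (insert none (X.image some)) = f X ∧
    h (insert none (Y.image some)) = f Y := by
  classical
  have g1 := gval1 f g htp
  have g2 := gval2 f g htp
  have g3 := gval3 f g htp
  -- sandwich : any W between (X∪Y) ×ˢ {i,j} and (X∪Y) ×ˢ {0,1,2} has g W = 2 * f (X∪Y)
  have sandwich : ∀ (W : Finset (E × Fin 3)) (i j : Fin 3), i ≠ j →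
      (X ∪ Y) ×ˢ ({i, j} : Finset (Fin 3)) ⊆ W →
      W ⊆ (X ∪ Y) ×ˢ ({0, 1, 2} : Finset (Fin 3)) →
      g W = 2 * f (X ∪ Y) := by
    intro W i j hij h1 h2'
    have hlo : 2 * f (X ∪ Y) ≤ g W := by rw [← g2 (X ∪ Y) i j hij]; exact hgmono _ _ h1
    have hhi : g W ≤ 2 * f (X ∪ Y) := by
      rw [← g3 (X ∪ Y) 0 1 2 (by decide) (by decide) (by decide)]
      exact hgmono _ _ h2'
    linarith
  -- step B : f X + f (X∪Y) ≤ g (X₀ ∪ (X∪Y)₁)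
  have stepB : f X + f (X ∪ Y) ≤
      g (X ×ˢ ({0} : Finset (Fin 3)) ∪ (X ∪ Y) ×ˢ {1}) := by
    have stepA : g (X ×ˢ ({0} : Finset (Fin 3)) ∪ (X ∪ Y) ×ˢ {1}) =
        g ((X ×ˢ ({0} : Finset (Fin 3)) ∪ (X ∪ Y) ×ˢ {1}) ∪ X ×ˢ {2}) := by
      refine (collapse_aux f g hgmono hgsub htp X 0 1 2 (by decide) (by decide) (by decide) _
        ?_).symm
      intro ⟨e, r⟩ hp
      simp [Finset.mem_product] at hp ⊢
      fin_cases r <;> simp_all <;> tauto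
    have hsub := hgsub ((X ×ˢ ({0} : Finset (Fin 3)) ∪ (X ∪ Y) ×ˢ {1}) ∪ X ×ˢ {2})
      ((X ∪ Y) ×ˢ ({2} : Finset (Fin 3)))
    have hone : ((X ×ˢ ({0} : Finset (Fin 3)) ∪ (X ∪ Y) ×ˢ {1}) ∪ X ×ˢ {2}) ∪ (X ∪ Y) ×ˢ {2} =
        (X ×ˢ ({0} : Finset (Fin 3)) ∪ (X ∪ Y) ×ˢ {1}) ∪ (X ∪ Y) ×ˢ {2} := by
      ext ⟨e, r⟩
      simp [Finset.mem_product]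
      fin_cases r <;> simp <;> tauto
    have htwo : ((X ×ˢ ({0} : Finset (Fin 3)) ∪ (X ∪ Y) ×ˢ {1}) ∪ X ×ˢ {2}) ∩ (X ∪ Y) ×ˢ {2} =
        X ×ˢ ({2} : Finset (Fin 3)) := by
      ext ⟨e, r⟩
      simp [Finset.mem_product]
      fin_cases r <;> simp <;> tauto
    have hval : g ((X ×ˢ ({0} : Finset (Fin 3)) ∪ (X ∪ Y) ×ˢ {1}) ∪ (X ∪ Y) ×ˢ {2}) =
        2 * f (X ∪ Y) := by
      refine sandwich _ 1 2 (by decide) ?_ ?_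
      · intro ⟨e, r⟩ hp
        simp [Finset.mem_product] at hp ⊢
        fin_cases r <;> simp_all <;> tauto
      · intro ⟨e, r⟩ hp
        simp [Finset.mem_product] at hp ⊢
        fin_cases r <;> simp_all <;> tauto
    rw [hone, htwo, hval, g1, g1] at hsub
    rw [stepA]
    linarith
  -- Claim 1 : g (X₀ ∪ Y₁) = f X + f Y
  have c1 : g (X ×ˢ ({0} : Finset (Fin 3)) ∪ Y ×ˢ {1}) = f X + f Y := by
    have hup : g (X ×ˢ ({0} : Finset (Fin 3)) ∪ Y ×ˢ {1}) ≤ f X + f Y := by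
      have hsub := hgsub (X ×ˢ ({0} : Finset (Fin 3))) (Y ×ˢ ({1} : Finset (Fin 3)))
      have hint : X ×ˢ ({0} : Finset (Fin 3)) ∩ Y ×ˢ ({1} : Finset (Fin 3)) = ∅ := by
        ext ⟨e, r⟩
        simp [Finset.mem_product]
        fin_cases r <;> simp <;> tauto
      rw [hint, hg0, g1, g1] at hsub
      linarith
    have hlo : f X + f Y ≤ g (X ×ˢ ({0} : Finset (Fin 3)) ∪ Y ×ˢ {1}) := by
      have hsub := hgsub (X ×ˢ ({0} : Finset (Fin 3)) ∪ Y ×ˢ {1})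
        ((X ∪ Y) ×ˢ ({1} : Finset (Fin 3)))
      have hone : (X ×ˢ ({0} : Finset (Fin 3)) ∪ Y ×ˢ {1}) ∪ (X ∪ Y) ×ˢ {1} =
          X ×ˢ ({0} : Finset (Fin 3)) ∪ (X ∪ Y) ×ˢ {1} := by
        ext ⟨e, r⟩
        simp [Finset.mem_product]
        fin_cases r <;> simp <;> tauto
      have htwo : (X ×ˢ ({0} : Finset (Fin 3)) ∪ Y ×ˢ {1}) ∩ (X ∪ Y) ×ˢ {1} =
          Y ×ˢ ({1} : Finset (Fin 3)) := by
        ext ⟨e, r⟩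
        simp [Finset.mem_product]
        fin_cases r <;> simp <;> tauto
      rw [hone, htwo, g1, g1] at hsub
      linarith
    linarith
  -- Claim 2 : g (X₀ ∪ Y₁ ∪ X₂) = f X + f (X∪Y)
  have c2 : g ((X ×ˢ ({0} : Finset (Fin 3)) ∪ Y ×ˢ {1}) ∪ X ×ˢ {2}) = f X + f (X ∪ Y) := by
    have hlo : f X + f (X ∪ Y) ≤ g ((X ×ˢ ({0} : Finset (Fin 3)) ∪ Y ×ˢ {1}) ∪ X ×ˢ {2}) := by
      have hcol := collapse_aux f g hgmono hgsub htp X 0 2 1 (by decide) (by decide) (by decide)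
        ((X ×ˢ ({0} : Finset (Fin 3)) ∪ Y ×ˢ {1}) ∪ X ×ˢ {2})
        (by
          intro ⟨e, r⟩ hp
          simp [Finset.mem_product] at hp ⊢
          fin_cases r <;> simp_all <;> tauto)
      have heq : (((X ×ˢ ({0} : Finset (Fin 3)) ∪ Y ×ˢ {1}) ∪ X ×ˢ {2}) ∪ X ×ˢ {1}) =
          (X ×ˢ ({0} : Finset (Fin 3)) ∪ (X ∪ Y) ×ˢ {1}) ∪ X ×ˢ {2} := by
        ext ⟨e, r⟩
        simp [Finset.mem_product]
        fin_cases r <;> simp <;> tauto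
      have hmono2 : g (X ×ˢ ({0} : Finset (Fin 3)) ∪ (X ∪ Y) ×ˢ {1}) ≤
          g ((X ×ˢ ({0} : Finset (Fin 3)) ∪ (X ∪ Y) ×ˢ {1}) ∪ X ×ˢ {2}) :=
        hgmono _ _ Finset.subset_union_left
      have hassoc : ((X ×ˢ ({0} : Finset (Fin 3)) ∪ (X ∪ Y) ×ˢ {1}) ∪ X ×ˢ {2}) =
          (((X ×ˢ ({0} : Finset (Fin 3)) ∪ Y ×ˢ {1}) ∪ X ×ˢ {2}) ∪ X ×ˢ {1}) := heq.symm
      rw [heq] at hcol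
      -- hcol : g ((X₀ ∪ (X∪Y)₁) ∪ X₂) = g ((X₀ ∪ Y₁) ∪ X₂)
      calc f X + f (X ∪ Y) ≤ g (X ×ˢ ({0} : Finset (Fin 3)) ∪ (X ∪ Y) ×ˢ {1}) := stepB
        _ ≤ g ((X ×ˢ ({0} : Finset (Fin 3)) ∪ (X ∪ Y) ×ˢ {1}) ∪ X ×ˢ {2}) := hmono2
        _ = g ((X ×ˢ ({0} : Finset (Fin 3)) ∪ Y ×ˢ {1}) ∪ X ×ˢ {2}) := hcol
    have hup : g ((X ×ˢ ({0} : Finset (Fin 3)) ∪ Y ×ˢ {1}) ∪ X ×ˢ {2}) ≤ f X + f (X ∪ Y) := by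
      have hsub := hgsub (X ×ˢ ({0, 1, 2} : Finset (Fin 3))) ((X ∪ Y) ×ˢ ({1} : Finset (Fin 3)))
      have htwo : X ×ˢ ({0, 1, 2} : Finset (Fin 3)) ∩ (X ∪ Y) ×ˢ ({1} : Finset (Fin 3)) =
          X ×ˢ ({1} : Finset (Fin 3)) := by
        ext ⟨e, r⟩
        simp [Finset.mem_product]
        fin_cases r <;> simp <;> tauto
      have hmono2 : g ((X ×ˢ ({0} : Finset (Fin 3)) ∪ Y ×ˢ {1}) ∪ X ×ˢ {2}) ≤
          g (X ×ˢ ({0, 1, 2} : Finset (Fin 3)) ∪ (X ∪ Y) ×ˢ ({1} : Finset (Fin 3))) := by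
        apply hgmono
        intro ⟨e, r⟩ hp
        simp [Finset.mem_product] at hp ⊢
        fin_cases r <;> simp_all <;> tauto
      rw [htwo, g1, g1, g3 X 0 1 2 (by decide) (by decide) (by decide)] at hsub
      linarith
    linarith
  -- Claim 3 : g (X₀ ∪ Y₁ ∪ Y₂) = f Y + f (X∪Y)
  have c3 : g ((X ×ˢ ({0} : Finset (Fin 3)) ∪ Y ×ˢ {1}) ∪ Y ×ˢ {2}) = f Y + f (X ∪ Y) := by
    have hlo : f Y + f (X ∪ Y) ≤ g ((X ×ˢ ({0} : Finset (Fin 3)) ∪ Y ×ˢ {1}) ∪ Y ×ˢ {2}) := by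
      -- first: f Y + f (X∪Y) ≤ g ((X∪Y)₀ ∪ Y₁ ∪ Y₂)
      have hsub := hgsub (((X ∪ Y) ×ˢ ({0} : Finset (Fin 3)) ∪ Y ×ˢ {1}) ∪ Y ×ˢ {2})
        ((X ∪ Y) ×ˢ ({1} : Finset (Fin 3)))
      have hone : ((((X ∪ Y) ×ˢ ({0} : Finset (Fin 3)) ∪ Y ×ˢ {1}) ∪ Y ×ˢ {2}) ∪
          (X ∪ Y) ×ˢ {1}) =
          (((X ∪ Y) ×ˢ ({0} : Finset (Fin 3)) ∪ (X ∪ Y) ×ˢ {1}) ∪ Y ×ˢ {2}) := by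
        ext ⟨e, r⟩
        simp [Finset.mem_product]
        fin_cases r <;> simp <;> tauto
      have htwo : ((((X ∪ Y) ×ˢ ({0} : Finset (Fin 3)) ∪ Y ×ˢ {1}) ∪ Y ×ˢ {2}) ∩
          (X ∪ Y) ×ˢ ({1} : Finset (Fin 3))) = Y ×ˢ ({1} : Finset (Fin 3)) := by
        ext ⟨e, r⟩
        simp [Finset.mem_product]
        fin_cases r <;> simp <;> tauto
      have hval : g (((X ∪ Y) ×ˢ ({0} : Finset (Fin 3)) ∪ (X ∪ Y) ×ˢ {1}) ∪ Y ×ˢ {2}) =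
          2 * f (X ∪ Y) := by
        refine sandwich _ 0 1 (by decide) ?_ ?_
        · intro ⟨e, r⟩ hp
          simp [Finset.mem_product] at hp ⊢
          fin_cases r <;> simp_all <;> tauto
        · intro ⟨e, r⟩ hp
          simp [Finset.mem_product] at hp ⊢
          fin_cases r <;> simp_all <;> tauto
      rw [hone, htwo, hval, g1, g1] at hsub
      -- collapse : g ((X₀ ∪ Y₁) ∪ Y₂ ∪ Y₀) = g ((X₀ ∪ Y₁) ∪ Y₂)
      have hcol := collapse_aux f g hgmono hgsub htp Y 1 2 0 (by decide) (by decide) (by decide)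
        ((X ×ˢ ({0} : Finset (Fin 3)) ∪ Y ×ˢ {1}) ∪ Y ×ˢ {2})
        (by
          intro ⟨e, r⟩ hp
          simp [Finset.mem_product] at hp ⊢
          fin_cases r <;> simp_all <;> tauto)
      have heq : (((X ×ˢ ({0} : Finset (Fin 3)) ∪ Y ×ˢ {1}) ∪ Y ×ˢ {2}) ∪ Y ×ˢ {0}) =
          (((X ∪ Y) ×ˢ ({0} : Finset (Fin 3)) ∪ Y ×ˢ {1}) ∪ Y ×ˢ {2}) := by
        ext ⟨e, r⟩
        simp [Finset.mem_product]
        fin_cases r <;> simp <;> tauto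
      rw [heq] at hcol
      linarith
    have hup : g ((X ×ˢ ({0} : Finset (Fin 3)) ∪ Y ×ˢ {1}) ∪ Y ×ˢ {2}) ≤ f Y + f (X ∪ Y) := by
      have hsub := hgsub (Y ×ˢ ({0, 1, 2} : Finset (Fin 3))) ((X ∪ Y) ×ˢ ({0} : Finset (Fin 3)))
      have htwo : Y ×ˢ ({0, 1, 2} : Finset (Fin 3)) ∩ (X ∪ Y) ×ˢ ({0} : Finset (Fin 3)) =
          Y ×ˢ ({0} : Finset (Fin 3)) := by
        ext ⟨e, r⟩
        simp [Finset.mem_product]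
        fin_cases r <;> simp <;> tauto
      have hmono2 : g ((X ×ˢ ({0} : Finset (Fin 3)) ∪ Y ×ˢ {1}) ∪ Y ×ˢ {2}) ≤
          g (Y ×ˢ ({0, 1, 2} : Finset (Fin 3)) ∪ (X ∪ Y) ×ˢ ({0} : Finset (Fin 3))) := by
        apply hgmono
        intro ⟨e, r⟩ hp
        simp [Finset.mem_product] at hp ⊢
        fin_cases r <;> simp_all <;> tauto
      rw [htwo, g1, g1, g3 Y 0 1 2 (by decide) (by decide) (by decide)] at hsub
      linarith
    linarith
  -- now compute the three h-values
  have he1 : (Finset.eraseNone ({none} : Finset (Option E))) = (∅ : Finset E) := by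
    ext a; simp
  have he2 : (Finset.eraseNone (insert none (X.image some))) = X := by
    ext a; simp
  have he3 : (Finset.eraseNone (insert none (Y.image some))) = Y := by
    ext a; simp
  refine ⟨?_, ?_, ?_⟩
  · rw [hh, if_pos (by simp), he1]
    rw [show (∅ : Finset E) ×ˢ ({2} : Finset (Fin 3)) = ∅ from Finset.empty_product _,
      Finset.union_empty, c1]
  · rw [hh, if_pos (by simp), he2, c2]
    ring
  · rw [hh, if_pos (by simp), he3, c3]
    ring
end

section
/- Let (E,f) be a polymatroid admitting a tensor product (E×{1,2,3},g) with U_{2,3}, and fix X,Y ⊆ E. The extension to E ∪ {z} defined by f(A∪{z}) = g(X×{1} ∪ Y×{2} ∪ A×{3}) - f(X∪Y) for A ⊆ E (and unchanged on subsets of E) is again a polymatroid, i.e., monotone and submodular with value 0 on ∅. -/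
set_option maxHeartbeats 1000000 in
theorem stmt_13 {E : Type*} [DecidableEq E]
    (f : Finset E → ℝ) (g : Finset (E × Fin 3) → ℝ)
    (hf0 : f ∅ = 0)
    (hfmono : ∀ S T : Finset E, S ⊆ T → f S ≤ f T)
    (hfsub : ∀ S T : Finset E, f (S ∪ T) + f (S ∩ T) ≤ f S + f T)
    (hg0 : g ∅ = 0)
    (hgmono : ∀ S T : Finset (E × Fin 3), S ⊆ T → g S ≤ g T)
    (hgsub : ∀ S T : Finset (E × Fin 3), g (S ∪ T) + g (S ∩ T) ≤ g S + g T)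
    (htp : ∀ (S : Finset E) (T : Finset (Fin 3)),
      g (S ×ˢ T) = f S * min (T.card : ℝ) 2)
    (X Y : Finset E)
    (h : Finset (Option E) → ℝ)
    (hh : ∀ S : Finset (Option E), h S =
      if none ∈ S then
        g (X ×ˢ {0} ∪ Y ×ˢ {1} ∪ S.eraseNone ×ˢ {2}) - f (X ∪ Y)
      else f S.eraseNone) :
    h ∅ = 0 ∧
    (∀ S T : Finset (Option E), S ⊆ T → h S ≤ h T) ∧
    (∀ S T : Finset (Option E), h (S ∪ T) + h (S ∩ T) ≤ h S + h T) := by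
  -- tensor values on small column sets
  have htp1 : ∀ (S : Finset E) (i : Fin 3), g (S ×ˢ {i}) = f S := by
    intro S i
    have h1 : min ((1:ℕ):ℝ) 2 = 1 := by norm_num
    rw [htp S {i}, Finset.card_singleton, h1, mul_one]
  have htp2 : ∀ (S : Finset E) (i j : Fin 3), i ≠ j →
      g (S ×ˢ {i, j}) = 2 * f S := by
    intro S i j hij
    have h2 : min ((2:ℕ):ℝ) 2 = 2 := by norm_num
    rw [htp S {i, j}, Finset.card_pair hij, h2, mul_comm]
  have htp3 : ∀ (S : Finset E) (i j k : Fin 3), i ≠ j → i ≠ k → j ≠ k →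
      g (S ×ˢ {i, j, k}) = 2 * f S := by
    intro S i j k hij hik hjk
    have hc : ({i, j, k} : Finset (Fin 3)).card = 3 := by
      rw [Finset.card_insert_of_notMem (by simp [hij, hik]), Finset.card_pair hjk]
    have h3 : min ((3:ℕ):ℝ) 2 = 2 := by norm_num
    rw [htp S {i, j, k}, hc, h3, mul_comm]
  -- Lemma D : a third copy is free when two copies are present
  have lemD : ∀ (i j k : Fin 3), i ≠ j → i ≠ k → j ≠ k →
      ∀ (A : Finset E) (W : Finset (E × Fin 3)),
      A ×ˢ {i} ⊆ W → A ×ˢ {j} ⊆ W → g (W ∪ A ×ˢ {k}) ≤ g W := by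
    intro i j k hij hik hjk A W h1 h2
    have hsub := hgsub W (A ×ˢ {i, j, k})
    have hU : W ∪ A ×ˢ ({i, j, k} : Finset (Fin 3)) = W ∪ A ×ˢ {k} := by
      ext ⟨e, c⟩
      simp only [Finset.mem_union, Finset.mem_product, Finset.mem_singleton,
        Finset.mem_insert]
      constructor
      · rintro (hw | ⟨hA, (rfl | rfl | rfl)⟩)
        · exact Or.inl hw
        · exact Or.inl (h1 (Finset.mem_product.mpr (by simp [hA])))
        · exact Or.inl (h2 (Finset.mem_product.mpr (by simp [hA])))
        · exact Or.inr ⟨hA, rfl⟩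
      · rintro (hw | ⟨hA, rfl⟩)
        · exact Or.inl hw
        · exact Or.inr ⟨hA, Or.inr (Or.inr rfl)⟩
    have hI : g (A ×ˢ ({i, j} : Finset (Fin 3))) ≤ g (W ∩ A ×ˢ {i, j, k}) := by
      apply hgmono
      intro p hp
      obtain ⟨hA, hc⟩ := Finset.mem_product.mp hp
      simp only [Finset.mem_insert, Finset.mem_singleton] at hc
      refine Finset.mem_inter.mpr ⟨?_, Finset.mem_product.mpr ⟨hA, by
        simp only [Finset.mem_insert, Finset.mem_singleton]; tauto⟩⟩
      rcases hc with hc | hc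
      · exact h1 (Finset.mem_product.mpr ⟨hA, by simp [hc]⟩)
      · exact h2 (Finset.mem_product.mpr ⟨hA, by simp [hc]⟩)
    rw [hU, htp3 A i j k hij hik hjk] at hsub
    rw [htp2 A i j hij] at hI
    linarith
  -- Lemma H
  have lemH : ∀ (R W : Finset E), R ⊆ W →
      f W + f R ≤ g (W ×ˢ {2} ∪ R ×ˢ ({0, 1} : Finset (Fin 3))) := by
    intro R W hRW
    have hsub := hgsub (W ×ˢ {2} ∪ R ×ˢ ({0, 1} : Finset (Fin 3))) (W ×ˢ {0})
    have hUb : g (W ×ˢ ({0, 2} : Finset (Fin 3))) ≤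
        g ((W ×ˢ {2} ∪ R ×ˢ ({0, 1} : Finset (Fin 3))) ∪ W ×ˢ {0}) := by
      apply hgmono
      intro ⟨e, c⟩ hp
      simp only [Finset.mem_product, Finset.mem_insert, Finset.mem_singleton] at hp
      obtain ⟨he, hc | hc⟩ := hp
      · exact Finset.mem_union_right _ (Finset.mem_product.mpr (by simp [he, hc]))
      · exact Finset.mem_union_left _ (Finset.mem_union_left _
          (Finset.mem_product.mpr (by simp [he, hc])))
    have hI : (W ×ˢ {2} ∪ R ×ˢ ({0, 1} : Finset (Fin 3))) ∩ W ×ˢ {0}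
        = R ×ˢ {0} := by
      ext ⟨e, c⟩
      simp only [Finset.mem_inter, Finset.mem_union, Finset.mem_product,
        Finset.mem_insert, Finset.mem_singleton]
      constructor
      · rintro ⟨⟨he, rfl⟩ | ⟨he, (rfl | rfl)⟩, hw, hc⟩ <;> simp_all
      · rintro ⟨he, rfl⟩
        exact ⟨Or.inr ⟨he, Or.inl rfl⟩, hRW he, rfl⟩
    rw [hI, htp1 R 0, htp1 W 0] at hsub
    have h02 : g (W ×ˢ ({0, 2} : Finset (Fin 3))) = 2 * f W :=
      htp2 W 0 2 (by decide)
    linarith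
  -- Key inequality (I)
  have key1 : ∀ A : Finset E, f (X ∪ Y) + f A ≤
      g (X ×ˢ {0} ∪ Y ×ˢ {1} ∪ A ×ˢ {2}) := by
    intro A
    have main : ∀ W : Finset E, A ⊆ W → X ⊆ W → Y ⊆ W →
        f W + (f (X ∪ Y) + f A) ≤ f W + g (X ×ˢ {0} ∪ Y ×ˢ {1} ∪ A ×ˢ {2}) := by
      intro W hAW hXW hYW
      have hRW : X ∪ Y ⊆ W := Finset.union_subset hXW hYW
      -- step 1
      have hsub := hgsub (X ×ˢ {0} ∪ Y ×ˢ {1} ∪ A ×ˢ {2}) (W ×ˢ {2})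
      have hU1 : (X ×ˢ {0} ∪ Y ×ˢ {1} ∪ A ×ˢ ({2} : Finset (Fin 3))) ∪ W ×ˢ {2}
          = X ×ˢ {0} ∪ Y ×ˢ {1} ∪ W ×ˢ {2} := by
        ext ⟨e, c⟩
        simp only [Finset.mem_union, Finset.mem_product, Finset.mem_singleton]
        have hA : e ∈ A → e ∈ W := fun ha => hAW ha
        tauto
      have hI1 : (X ×ˢ {0} ∪ Y ×ˢ {1} ∪ A ×ˢ ({2} : Finset (Fin 3))) ∩ W ×ˢ {2}
          = A ×ˢ {2} := by
        ext ⟨e, c⟩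
        simp only [Finset.mem_inter, Finset.mem_union, Finset.mem_product,
          Finset.mem_singleton]
        constructor
        · rintro ⟨(⟨h1, h2⟩ | ⟨h1, h2⟩) | ⟨h1, h2⟩, h3, h4⟩ <;> simp_all
        · rintro ⟨h1, rfl⟩
          exact ⟨Or.inr ⟨h1, rfl⟩, hAW h1, rfl⟩
      rw [hU1, hI1, htp1 A 2, htp1 W 2] at hsub
      -- step 2 : add Y in column 0
      have hstep2 : g ((X ×ˢ {0} ∪ Y ×ˢ {1} ∪ W ×ˢ {2}) ∪ Y ×ˢ {0}) ≤
          g (X ×ˢ {0} ∪ Y ×ˢ {1} ∪ W ×ˢ {2}) := by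
        apply lemD 1 2 0 (by decide) (by decide) (by decide)
        · intro p hp
          exact Finset.mem_union_left _ (Finset.mem_union_right _ hp)
        · intro p hp
          obtain ⟨he, hc⟩ := Finset.mem_product.mp hp
          exact Finset.mem_union_right _ (Finset.mem_product.mpr ⟨hYW he, hc⟩)
      have hU2 : (X ×ˢ {0} ∪ Y ×ˢ {1} ∪ W ×ˢ ({2} : Finset (Fin 3))) ∪ Y ×ˢ {0}
          = (X ∪ Y) ×ˢ {0} ∪ Y ×ˢ {1} ∪ W ×ˢ {2} := by
        ext ⟨e, c⟩
        simp only [Finset.mem_union, Finset.mem_product, Finset.mem_singleton]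
        tauto
      rw [hU2] at hstep2
      -- step 3 : add X in column 1
      have hstep3 : g (((X ∪ Y) ×ˢ {0} ∪ Y ×ˢ {1} ∪ W ×ˢ {2}) ∪ X ×ˢ {1}) ≤
          g ((X ∪ Y) ×ˢ {0} ∪ Y ×ˢ {1} ∪ W ×ˢ {2}) := by
        apply lemD 0 2 1 (by decide) (by decide) (by decide)
        · intro p hp
          obtain ⟨he, hc⟩ := Finset.mem_product.mp hp
          exact Finset.mem_union_left _ (Finset.mem_union_left _
            (Finset.mem_product.mpr ⟨Finset.mem_union_left _ he, hc⟩))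
        · intro p hp
          obtain ⟨he, hc⟩ := Finset.mem_product.mp hp
          exact Finset.mem_union_right _ (Finset.mem_product.mpr ⟨hXW he, hc⟩)
      have hU3 : ((X ∪ Y) ×ˢ {0} ∪ Y ×ˢ {1} ∪ W ×ˢ ({2} : Finset (Fin 3))) ∪ X ×ˢ {1}
          = W ×ˢ {2} ∪ (X ∪ Y) ×ˢ ({0, 1} : Finset (Fin 3)) := by
        ext ⟨e, c⟩
        simp only [Finset.mem_union, Finset.mem_product, Finset.mem_singleton,
          Finset.mem_insert]
        tauto
      rw [hU3] at hstep3
      have hfinal := lemH (X ∪ Y) W hRW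
      linarith
    have := main (X ∪ Y ∪ A) Finset.subset_union_right
      (Finset.subset_union_left.trans Finset.subset_union_left)
      (Finset.subset_union_right.trans Finset.subset_union_left)
    linarith
  -- Key inequality (II)
  have key2 : ∀ A B : Finset E,
      g (X ×ˢ {0} ∪ Y ×ˢ {1} ∪ (A ∪ B) ×ˢ {2}) + f (A ∩ B) ≤
      g (X ×ˢ {0} ∪ Y ×ˢ {1} ∪ A ×ˢ {2}) + f B := by
    intro A B
    have hsub := hgsub (X ×ˢ {0} ∪ Y ×ˢ {1} ∪ A ×ˢ {2}) (B ×ˢ {2})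
    have hU : (X ×ˢ {0} ∪ Y ×ˢ {1} ∪ A ×ˢ ({2} : Finset (Fin 3))) ∪ B ×ˢ {2}
        = X ×ˢ {0} ∪ Y ×ˢ {1} ∪ (A ∪ B) ×ˢ {2} := by
      ext ⟨e, c⟩
      simp only [Finset.mem_union, Finset.mem_product, Finset.mem_singleton]
      tauto
    have hI : (X ×ˢ {0} ∪ Y ×ˢ {1} ∪ A ×ˢ ({2} : Finset (Fin 3))) ∩ B ×ˢ {2}
        = (A ∩ B) ×ˢ {2} := by
      ext ⟨e, c⟩
      simp only [Finset.mem_inter, Finset.mem_union, Finset.mem_product,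
        Finset.mem_singleton]
      constructor
      · rintro ⟨(⟨h1, h2⟩ | ⟨h1, h2⟩) | ⟨h1, h2⟩, h3, h4⟩ <;> simp_all
      · rintro ⟨⟨h1, h2⟩, rfl⟩
        exact ⟨Or.inr ⟨h1, rfl⟩, h2, rfl⟩
    rw [hU, hI, htp1 B 2, htp1 (A ∩ B) 2] at hsub
    linarith
  -- eraseNone facts
  have hENu : ∀ S T : Finset (Option E),
      (S ∪ T).eraseNone = S.eraseNone ∪ T.eraseNone := by
    intro S T; ext a; simp
  have hENi : ∀ S T : Finset (Option E),
      (S ∩ T).eraseNone = S.eraseNone ∩ T.eraseNone := by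
    intro S T; ext a; simp
  have hENm : ∀ S T : Finset (Option E), S ⊆ T → S.eraseNone ⊆ T.eraseNone := by
    intro S T hST a ha
    simp only [Finset.mem_eraseNone] at *
    exact hST ha
  refine ⟨?_, ?_, ?_⟩
  · rw [hh]
    simp [hf0]
  · -- monotonicity
    intro S T hST
    rw [hh S, hh T]
    by_cases hS : none ∈ S <;> by_cases hT : none ∈ T
    · rw [if_pos hS, if_pos hT]
      have hmono : g (X ×ˢ {0} ∪ Y ×ˢ {1} ∪ S.eraseNone ×ˢ {2}) ≤
          g (X ×ˢ {0} ∪ Y ×ˢ {1} ∪ T.eraseNone ×ˢ {2}) := by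
        apply hgmono
        exact Finset.union_subset_union (subset_refl _)
          (Finset.product_subset_product (hENm S T hST) (subset_refl _))
      linarith
    · exact absurd (hST hS) hT
    · rw [if_neg hS, if_pos hT]
      have h1 : f S.eraseNone ≤ f T.eraseNone := hfmono _ _ (hENm S T hST)
      have h2 := key1 T.eraseNone
      linarith
    · rw [if_neg hS, if_neg hT]
      exact hfmono _ _ (hENm S T hST)
  · -- submodularity
    intro S T
    rw [hh S, hh T, hh (S ∪ T), hh (S ∩ T)]
    by_cases hS : none ∈ S <;> by_cases hT : none ∈ T
    · have hUT : none ∈ S ∪ T := Finset.mem_union_left _ hS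
      have hIT : none ∈ S ∩ T := Finset.mem_inter.mpr ⟨hS, hT⟩
      rw [if_pos hS, if_pos hT, if_pos hUT, if_pos hIT, hENu, hENi]
      have hsub := hgsub (X ×ˢ {0} ∪ Y ×ˢ {1} ∪ S.eraseNone ×ˢ {2})
        (X ×ˢ {0} ∪ Y ×ˢ {1} ∪ T.eraseNone ×ˢ {2})
      have hU : (X ×ˢ {0} ∪ Y ×ˢ {1} ∪ S.eraseNone ×ˢ ({2} : Finset (Fin 3))) ∪
          (X ×ˢ {0} ∪ Y ×ˢ {1} ∪ T.eraseNone ×ˢ {2})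
          = X ×ˢ {0} ∪ Y ×ˢ {1} ∪ (S.eraseNone ∪ T.eraseNone) ×ˢ {2} := by
        ext ⟨e, c⟩
        simp only [Finset.mem_union, Finset.mem_product, Finset.mem_singleton]
        tauto
      have hI : (X ×ˢ {0} ∪ Y ×ˢ {1} ∪ S.eraseNone ×ˢ ({2} : Finset (Fin 3))) ∩
          (X ×ˢ {0} ∪ Y ×ˢ {1} ∪ T.eraseNone ×ˢ {2})
          = X ×ˢ {0} ∪ Y ×ˢ {1} ∪ (S.eraseNone ∩ T.eraseNone) ×ˢ {2} := by
        ext ⟨e, c⟩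
        simp only [Finset.mem_inter, Finset.mem_union, Finset.mem_product,
          Finset.mem_singleton]
        tauto
      rw [hU, hI] at hsub
      linarith
    · have hUT : none ∈ S ∪ T := Finset.mem_union_left _ hS
      have hIT : none ∉ S ∩ T := fun hc => hT (Finset.mem_inter.mp hc).2
      rw [if_pos hS, if_neg hT, if_pos hUT, if_neg hIT, hENu, hENi]
      have := key2 S.eraseNone T.eraseNone
      linarith
    · have hUT : none ∈ S ∪ T := Finset.mem_union_right _ hT
      have hIT : none ∉ S ∩ T := fun hc => hS (Finset.mem_inter.mp hc).1
      rw [if_neg hS, if_pos hT, if_pos hUT, if_neg hIT, hENu, hENi]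
      have := key2 T.eraseNone S.eraseNone
      rw [Finset.union_comm T.eraseNone S.eraseNone,
        Finset.inter_comm T.eraseNone S.eraseNone] at this
      linarith
    · have hUT : none ∉ S ∪ T := by
        simp only [Finset.mem_union]
        tauto
      have hIT : none ∉ S ∩ T := fun hc => hS (Finset.mem_inter.mp hc).1
      rw [if_neg hS, if_neg hT, if_neg hUT, if_neg hIT, hENu, hENi]
      exact hfsub S.eraseNone T.eraseNone
end

section
/- Every polymatroid that admits a tensor product with U_{2,3} is 1-CI: for every pair (X,Y) of subsets of the ground set E, there exists an extension (E∪{z}, f) that is a polymatroid in which f(z) = f(X)+f(Y)-f(X∪Y), f(X∪{z}) = f(X), and f(Y∪{z}) = f(Y). -/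
set_option maxHeartbeats 1000000

theorem stmt_14 {E : Type*} [DecidableEq E]
    (f : Finset E → ℝ) (g : Finset (E × Fin 3) → ℝ)
    (hf0 : f ∅ = 0)
    (hfmono : ∀ S T : Finset E, S ⊆ T → f S ≤ f T)
    (hfsub : ∀ S T : Finset E, f (S ∪ T) + f (S ∩ T) ≤ f S + f T)
    (hg0 : g ∅ = 0)
    (hgmono : ∀ S T : Finset (E × Fin 3), S ⊆ T → g S ≤ g T)
    (hgsub : ∀ S T : Finset (E × Fin 3), g (S ∪ T) + g (S ∩ T) ≤ g S + g T)
    (htp : ∀ (S : Finset E) (T : Finset (Fin 3)),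
      g (S ×ˢ T) = f S * min (T.card : ℝ) 2) :
    ∀ X Y : Finset E, ∃ h : Finset (Option E) → ℝ,
      (∀ A : Finset E, h (A.image some) = f A) ∧
      h ∅ = 0 ∧
      (∀ S T : Finset (Option E), S ⊆ T → h S ≤ h T) ∧
      (∀ S T : Finset (Option E), h (S ∪ T) + h (S ∩ T) ≤ h S + h T) ∧
      h {none} = f X + f Y - f (X ∪ Y) ∧
      h (insert none (X.image some)) = f X ∧
      h (insert none (Y.image some)) = f Y := by
  intro X Y
  classical
  -- products with one column
  have gp1 : ∀ (S : Finset E) (i : Fin 3), g (S ×ˢ ({i} : Finset (Fin 3))) = f S := by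
    intro S i
    rw [htp]
    simp
  -- products with at least two columns
  have gp2 : ∀ (S : Finset E) (T : Finset (Fin 3)), 2 ≤ T.card → g (S ×ˢ T) = f S * 2 := by
    intro S T hT
    rw [htp]
    rw [min_eq_right (by exact_mod_cast hT)]
  -- the free-expansion lemma: if two columns of W are present, a third is free
  have free : ∀ (W : Finset E) (i j k : Fin 3) (S : Finset (E × Fin 3)), i ≠ j →
      W ×ˢ ({i, j} : Finset (Fin 3)) ⊆ S →
      g (S ∪ W ×ˢ ({k} : Finset (Fin 3))) = g S := by
    intro W i j k S hij hWS
    have hcard2 : ({i, j} : Finset (Fin 3)).card = 2 := by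
      rw [Finset.card_insert_of_notMem (by simp [hij]), Finset.card_singleton]
    have hcard : 2 ≤ (insert k ({i, j} : Finset (Fin 3))).card := by
      calc 2 = ({i, j} : Finset (Fin 3)).card := hcard2.symm
        _ ≤ _ := Finset.card_le_card (Finset.subset_insert _ _)
    have hsub := hgsub S (W ×ˢ (insert k ({i, j} : Finset (Fin 3))))
    have he1 : S ∪ W ×ˢ (insert k ({i, j} : Finset (Fin 3))) = S ∪ W ×ˢ ({k} : Finset (Fin 3)) := by
      ext x
      obtain ⟨e, t⟩ := x
      have h1 : e ∈ W → t = i ∨ t = j → (e, t) ∈ S := by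
        intro hw ht
        exact hWS (by simp [hw, ht])
      simp only [Finset.mem_union, Finset.mem_product, Finset.mem_insert, Finset.mem_singleton]
      tauto
    have hmono1 : g (W ×ˢ ({i, j} : Finset (Fin 3))) ≤
        g (S ∩ W ×ˢ (insert k ({i, j} : Finset (Fin 3)))) := by
      apply hgmono
      apply Finset.subset_inter hWS
      exact Finset.product_subset_product (le_refl _) (Finset.subset_insert _ _)
    have hv1 : g (W ×ˢ (insert k ({i, j} : Finset (Fin 3)))) = f W * 2 := gp2 _ _ hcard
    have hv2 : g (W ×ˢ ({i, j} : Finset (Fin 3))) = f W * 2 := gp2 _ _ hcard2.ge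
    have hmono2 : g S ≤ g (S ∪ W ×ˢ ({k} : Finset (Fin 3))) :=
      hgmono _ _ Finset.subset_union_left
    rw [he1] at hsub
    linarith
  -- the base set
  set R0 : Finset (E × Fin 3) := X ×ˢ ({0} : Finset (Fin 3)) ∪ Y ×ˢ ({1} : Finset (Fin 3)) with hR0
  -- the main family of sets
  set P : Finset E → Finset (E × Fin 3) := fun A => A ×ˢ ({2} : Finset (Fin 3)) ∪ R0 with hP
  -- u := g R0
  -- monotonicity of P in g
  have Pmono : ∀ A B : Finset E, A ⊆ B → g (P A) ≤ g (P B) := by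
    intro A B hAB
    apply hgmono
    exact Finset.union_subset_union (Finset.product_subset_product hAB (le_refl _)) (le_refl _)
  -- the key restriction of marginals : g (P (A ∪ C)) + f A ≤ g (P A) + f (A ∪ C)
  have Hsub1 : ∀ A C : Finset E, g (P (A ∪ C)) + f A ≤ g (P A) + f (A ∪ C) := by
    intro A C
    have hsub := hgsub (P A) ((A ∪ C) ×ˢ ({2} : Finset (Fin 3)))
    have he1 : P A ∪ (A ∪ C) ×ˢ ({2} : Finset (Fin 3)) = P (A ∪ C) := by
      ext x
      obtain ⟨e, t⟩ := x
      simp only [hP, hR0, Finset.mem_union, Finset.mem_product, Finset.mem_singleton]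
      tauto
    have he2 : P A ∩ (A ∪ C) ×ˢ ({2} : Finset (Fin 3)) = A ×ˢ ({2} : Finset (Fin 3)) := by
      ext x
      obtain ⟨e, t⟩ := x
      fin_cases t <;>
        simp only [hP, hR0, Finset.mem_inter, Finset.mem_union, Finset.mem_product,
          Finset.mem_singleton] <;>
        simp <;> tauto
    rw [he1, he2, gp1, gp1] at hsub
    linarith
  -- P5 : for B ⊇ X ∪ Y, g (P B) ≥ f B + f (X ∪ Y)
  have P5 : ∀ B : Finset E, X ⊆ B → Y ⊆ B → f B + f (X ∪ Y) ≤ g (P B) := by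
    intro B hXB hYB
    have hfree1 : g (P B ∪ X ×ˢ ({1} : Finset (Fin 3))) = g (P B) := by
      apply free X 0 2 1 _ (by decide)
      intro x hx
      obtain ⟨e, t⟩ := x
      simp only [Finset.mem_product, Finset.mem_insert, Finset.mem_singleton] at hx
      simp only [hP, hR0, Finset.mem_union, Finset.mem_product, Finset.mem_singleton]
      rcases hx with ⟨he, ht | ht⟩
      · tauto
      · exact Or.inl ⟨hXB he, ht⟩
    have hfree2 : g (P B ∪ X ×ˢ ({1} : Finset (Fin 3)) ∪ Y ×ˢ ({0} : Finset (Fin 3)))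
        = g (P B ∪ X ×ˢ ({1} : Finset (Fin 3))) := by
      apply free Y 1 2 0 _ (by decide)
      intro x hx
      obtain ⟨e, t⟩ := x
      simp only [Finset.mem_product, Finset.mem_insert, Finset.mem_singleton] at hx
      simp only [hP, hR0, Finset.mem_union, Finset.mem_product, Finset.mem_singleton]
      rcases hx with ⟨he, ht | ht⟩
      · tauto
      · exact Or.inl (Or.inl ⟨hYB he, ht⟩)
    have he3 : P B ∪ X ×ˢ ({1} : Finset (Fin 3)) ∪ Y ×ˢ ({0} : Finset (Fin 3))
        = B ×ˢ ({2} : Finset (Fin 3)) ∪ (X ∪ Y) ×ˢ ({0, 1} : Finset (Fin 3)) := by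
      ext x
      obtain ⟨e, t⟩ := x
      have h1 : e ∈ X → e ∈ B := fun h => hXB h
      have h2 : e ∈ Y → e ∈ B := fun h => hYB h
      fin_cases t <;>
        simp only [hP, hR0, Finset.mem_union, Finset.mem_product, Finset.mem_singleton,
          Finset.mem_insert] <;> simp <;> tauto
    set T : Finset (E × Fin 3) := B ×ˢ ({2} : Finset (Fin 3)) ∪ (X ∪ Y) ×ˢ ({0, 1} : Finset (Fin 3)) with hT
    have hgT : g T = g (P B) := by rw [← he3, hfree2, hfree1]
    have hsub := hgsub T (B ×ˢ ({0} : Finset (Fin 3)))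
    have hun : g (B ×ˢ ({0, 2} : Finset (Fin 3))) ≤ g (T ∪ B ×ˢ ({0} : Finset (Fin 3))) := by
      apply hgmono
      intro x hx
      obtain ⟨e, t⟩ := x
      simp only [Finset.mem_product, Finset.mem_insert, Finset.mem_singleton] at hx
      simp only [hT, Finset.mem_union, Finset.mem_product, Finset.mem_singleton, Finset.mem_insert]
      tauto
    have hin : T ∩ B ×ˢ ({0} : Finset (Fin 3)) = (X ∪ Y) ×ˢ ({0} : Finset (Fin 3)) := by
      ext x
      obtain ⟨e, t⟩ := x
      have h1 : e ∈ X → e ∈ B := fun h => hXB h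
      have h2 : e ∈ Y → e ∈ B := fun h => hYB h
      fin_cases t <;>
        simp only [hT, Finset.mem_inter, Finset.mem_union, Finset.mem_product,
          Finset.mem_singleton, Finset.mem_insert] <;> simp <;> tauto
    have hv1 : g (B ×ˢ ({0, 2} : Finset (Fin 3))) = f B * 2 := by
      apply gp2
      rw [Finset.card_insert_of_notMem (by decide), Finset.card_singleton]
    rw [hin, gp1, gp1] at hsub
    rw [hgT] at hsub
    linarith
  -- K : g (P A) ≥ f A + f (X ∪ Y) for all A
  have K : ∀ A : Finset E, f A + f (X ∪ Y) ≤ g (P A) := by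
    intro A
    have h1 := Hsub1 A (X ∪ Y)
    have h2 := P5 (A ∪ (X ∪ Y)) (by intro x hx; simp [hx]) (by intro x hx; simp [hx])
    linarith
  -- u ≤ f X + f Y
  have umax : g R0 ≤ f X + f Y := by
    have hsub := hgsub (X ×ˢ ({0} : Finset (Fin 3))) (Y ×ˢ ({1} : Finset (Fin 3)))
    have hin : X ×ˢ ({0} : Finset (Fin 3)) ∩ Y ×ˢ ({1} : Finset (Fin 3)) = ∅ := by
      ext x
      obtain ⟨e, t⟩ := x
      fin_cases t <;> simp
    rw [hin, hg0, gp1, gp1] at hsub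
    rw [hR0]
    linarith
  -- D-set bound for X
  have HXup : g (P X) ≤ g R0 + f (X ∪ Y) - f Y := by
    have hsub := hgsub R0 ((X ∪ Y) ×ˢ ({1} : Finset (Fin 3)))
    have hun : R0 ∪ (X ∪ Y) ×ˢ ({1} : Finset (Fin 3))
        = X ×ˢ ({0} : Finset (Fin 3)) ∪ (X ∪ Y) ×ˢ ({1} : Finset (Fin 3)) := by
      ext x
      obtain ⟨e, t⟩ := x
      simp only [hR0, Finset.mem_union, Finset.mem_product, Finset.mem_singleton]
      tauto
    have hin : R0 ∩ (X ∪ Y) ×ˢ ({1} : Finset (Fin 3)) = Y ×ˢ ({1} : Finset (Fin 3)) := by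
      ext x
      obtain ⟨e, t⟩ := x
      fin_cases t <;>
        simp only [hR0, Finset.mem_inter, Finset.mem_union, Finset.mem_product,
          Finset.mem_singleton] <;> simp <;> tauto
    rw [hun, hin, gp1, gp1] at hsub
    have hfree1 : g ((X ×ˢ ({0} : Finset (Fin 3)) ∪ (X ∪ Y) ×ˢ ({1} : Finset (Fin 3)))
        ∪ X ×ˢ ({2} : Finset (Fin 3)))
        = g (X ×ˢ ({0} : Finset (Fin 3)) ∪ (X ∪ Y) ×ˢ ({1} : Finset (Fin 3))) := by
      apply free X 0 1 2 _ (by decide)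
      intro x hx
      obtain ⟨e, t⟩ := x
      simp only [Finset.mem_product, Finset.mem_insert, Finset.mem_singleton] at hx
      simp only [Finset.mem_union, Finset.mem_product, Finset.mem_singleton]
      tauto
    have hsubset : g (P X) ≤ g ((X ×ˢ ({0} : Finset (Fin 3)) ∪ (X ∪ Y) ×ˢ ({1} : Finset (Fin 3)))
        ∪ X ×ˢ ({2} : Finset (Fin 3))) := by
      apply hgmono
      intro x hx
      obtain ⟨e, t⟩ := x
      simp only [hP, hR0, Finset.mem_union, Finset.mem_product, Finset.mem_singleton] at hx
      simp only [Finset.mem_union, Finset.mem_product, Finset.mem_singleton]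
      tauto
    rw [hfree1] at hsubset
    linarith
  -- D-set bound for Y
  have HYup : g (P Y) ≤ g R0 + f (X ∪ Y) - f X := by
    have hsub := hgsub R0 ((X ∪ Y) ×ˢ ({0} : Finset (Fin 3)))
    have hun : R0 ∪ (X ∪ Y) ×ˢ ({0} : Finset (Fin 3))
        = (X ∪ Y) ×ˢ ({0} : Finset (Fin 3)) ∪ Y ×ˢ ({1} : Finset (Fin 3)) := by
      ext x
      obtain ⟨e, t⟩ := x
      simp only [hR0, Finset.mem_union, Finset.mem_product, Finset.mem_singleton]
      tauto
    have hin : R0 ∩ (X ∪ Y) ×ˢ ({0} : Finset (Fin 3)) = X ×ˢ ({0} : Finset (Fin 3)) := by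
      ext x
      obtain ⟨e, t⟩ := x
      fin_cases t <;>
        simp only [hR0, Finset.mem_inter, Finset.mem_union, Finset.mem_product,
          Finset.mem_singleton] <;> simp <;> tauto
    rw [hun, hin, gp1, gp1] at hsub
    have hfree1 : g (((X ∪ Y) ×ˢ ({0} : Finset (Fin 3)) ∪ Y ×ˢ ({1} : Finset (Fin 3)))
        ∪ Y ×ˢ ({2} : Finset (Fin 3)))
        = g ((X ∪ Y) ×ˢ ({0} : Finset (Fin 3)) ∪ Y ×ˢ ({1} : Finset (Fin 3))) := by
      apply free Y 0 1 2 _ (by decide)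
      intro x hx
      obtain ⟨e, t⟩ := x
      simp only [Finset.mem_product, Finset.mem_insert, Finset.mem_singleton] at hx
      simp only [Finset.mem_union, Finset.mem_product, Finset.mem_singleton]
      tauto
    have hsubset : g (P Y) ≤ g (((X ∪ Y) ×ˢ ({0} : Finset (Fin 3)) ∪ Y ×ˢ ({1} : Finset (Fin 3)))
        ∪ Y ×ˢ ({2} : Finset (Fin 3))) := by
      apply hgmono
      intro x hx
      obtain ⟨e, t⟩ := x
      simp only [hP, hR0, Finset.mem_union, Finset.mem_product, Finset.mem_singleton] at hx
      simp only [Finset.mem_union, Finset.mem_product, Finset.mem_singleton]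
      tauto
    rw [hfree1] at hsubset
    linarith
  -- u = f X + f Y
  have ueq : g R0 = f X + f Y := by
    have h1 := K X
    linarith
  have HXeq : g (P X) = f X + f (X ∪ Y) := by
    have h1 := K X
    linarith [HXup, ueq]
  have HYeq : g (P Y) = f Y + f (X ∪ Y) := by
    have h1 := K Y
    linarith [HYup, ueq]
  have uPe : P ∅ = R0 := by
    rw [hP]
    simp
  -- Intersection / union structure of P
  have Punion : ∀ A B : Finset E, P A ∪ P B = P (A ∪ B) := by
    intro A B
    ext x
    obtain ⟨e, t⟩ := x
    simp only [hP, hR0, Finset.mem_union, Finset.mem_product, Finset.mem_singleton]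
    tauto
  have Pinter : ∀ A B : Finset E, P A ∩ P B = P (A ∩ B) := by
    intro A B
    ext x
    obtain ⟨e, t⟩ := x
    fin_cases t <;>
      simp only [hP, hR0, Finset.mem_inter, Finset.mem_union, Finset.mem_product,
        Finset.mem_singleton, Finset.mem_inter] <;> simp <;> tauto
  -- the extension
  refine ⟨fun S => if none ∈ S then g (P (S.eraseNone)) - f (X ∪ Y) else f (S.eraseNone),
    ?_, ?_, ?_, ?_, ?_, ?_, ?_⟩
  · intro A
    dsimp only
    rw [if_neg (by simp), Finset.eraseNone_image_some]
  · dsimp only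
    rw [if_neg (by simp), Finset.eraseNone_empty, hf0]
  · -- monotonicity
    intro S T hST
    dsimp only
    have hAB : S.eraseNone ⊆ T.eraseNone := by
      intro a ha
      rw [Finset.mem_eraseNone] at ha ⊢
      exact hST ha
    by_cases hnS : none ∈ S
    · rw [if_pos hnS, if_pos (hST hnS)]
      have := Pmono _ _ hAB
      linarith
    · rw [if_neg hnS]
      by_cases hnT : none ∈ T
      · rw [if_pos hnT]
        have h1 := hfmono _ _ hAB
        have h2 := K T.eraseNone
        linarith
      · rw [if_neg hnT]
        exact hfmono _ _ hAB
  · -- submodularity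
    intro S T
    dsimp only
    have hU : (S ∪ T).eraseNone = S.eraseNone ∪ T.eraseNone := Finset.eraseNone_union S T
    have hI : (S ∩ T).eraseNone = S.eraseNone ∩ T.eraseNone := Finset.eraseNone_inter S T
    by_cases hnS : none ∈ S <;> by_cases hnT : none ∈ T
    · rw [if_pos hnS, if_pos hnT, if_pos (Finset.mem_union_left _ hnS),
        if_pos (Finset.mem_inter.2 ⟨hnS, hnT⟩), hU, hI]
      have hsub := hgsub (P S.eraseNone) (P T.eraseNone)
      rw [Punion, Pinter] at hsub
      linarith
    · rw [if_pos hnS, if_neg hnT, if_pos (Finset.mem_union_left _ hnS),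
        if_neg (fun h => hnT (Finset.mem_inter.1 h).2), hU, hI]
      have h1 := Hsub1 S.eraseNone T.eraseNone
      have h2 := hfsub S.eraseNone T.eraseNone
      linarith
    · rw [if_neg hnS, if_pos hnT, if_pos (Finset.mem_union_right _ hnT),
        if_neg (fun h => hnS (Finset.mem_inter.1 h).1), hU, hI]
      have h1 := Hsub1 T.eraseNone S.eraseNone
      have h2 := hfsub S.eraseNone T.eraseNone
      have he : T.eraseNone ∪ S.eraseNone = S.eraseNone ∪ T.eraseNone := Finset.union_comm _ _
      rw [he] at h1
      linarith
    · rw [if_neg hnS, if_neg hnT, if_neg (by simp [hnS, hnT]),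
        if_neg (fun h => hnT (Finset.mem_inter.1 h).2), hU, hI]
      exact hfsub S.eraseNone T.eraseNone
  · dsimp only
    rw [if_pos (Finset.mem_singleton_self none), Finset.eraseNone_none, uPe, ueq]
  · have he : (insert none (X.image some)).eraseNone = X := by
      ext a
      rw [Finset.mem_eraseNone]
      simp
    dsimp only
    rw [if_pos (Finset.mem_insert_self _ _), he, HXeq]
    ring
  · have he : (insert none (Y.image some)).eraseNone = Y := by
      ext a
      rw [Finset.mem_eraseNone]
      simp
    dsimp only
    rw [if_pos (Finset.mem_insert_self _ _), he, HYeq]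
    ring
end

section
/- For every K-linear polymatroid (E,f) and every pair (X,Y) of subsets of E, there exists a K-linear common information extension: an extension (E∪{z},f) that is K-linearly representable, with f(z) = f(X)+f(Y)-f(X∪Y) and f(X∪{z}) = f(X), f(Y∪{z}) = f(Y). It is obtained by adjoining the subspace V_z = (∑_{x∈X}V_x) ∩ (∑_{x∈Y}V_x). -/
set_option maxHeartbeats 1000000 in
theorem stmt_15 {K V : Type*} [Field K] [AddCommGroup V] [Module K V]
    [FiniteDimensional K V] {E : Type*} [DecidableEq E]
    (Vx : E → Submodule K V)
    (f : Finset E → ℝ)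
    (hf : ∀ A : Finset E, f A = Module.finrank K ↥(⨆ x ∈ A, Vx x))
    (X Y : Finset E) :
    ∃ (W : Option E → Submodule K V) (h : Finset (Option E) → ℝ),
      (∀ x : E, W (some x) = Vx x) ∧
      W none = (⨆ x ∈ X, Vx x) ⊓ (⨆ x ∈ Y, Vx x) ∧
      (∀ S : Finset (Option E), h S = Module.finrank K ↥(⨆ o ∈ S, W o)) ∧
      (∀ A : Finset E, h (A.image some) = f A) ∧
      h {none} = f X + f Y - f (X ∪ Y) ∧
      h (insert none (X.image some)) = f X ∧
      h (insert none (Y.image some)) = f Y := by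
  classical
  refine ⟨fun o => o.elim ((⨆ x ∈ X, Vx x) ⊓ (⨆ x ∈ Y, Vx x)) Vx,
    fun S => (Module.finrank K
      ↥(⨆ o ∈ S, o.elim ((⨆ x ∈ X, Vx x) ⊓ (⨆ x ∈ Y, Vx x)) Vx) : ℝ),
    fun x => rfl, rfl, fun S => rfl, ?_, ?_, ?_, ?_⟩
  · intro A
    have heq : (⨆ o ∈ A.image some,
        o.elim ((⨆ x ∈ X, Vx x) ⊓ (⨆ x ∈ Y, Vx x)) Vx) = ⨆ x ∈ A, Vx x := by
      rw [Finset.iSup_finset_image]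
      rfl
    show ((Module.finrank K _ : ℕ) : ℝ) = _
    rw [heq, hf]
  · have key := Submodule.finrank_sup_add_finrank_inf_eq (⨆ x ∈ X, Vx x) (⨆ x ∈ Y, Vx x)
    have hsup : (⨆ x ∈ X, Vx x) ⊔ (⨆ x ∈ Y, Vx x) = ⨆ x ∈ (X ∪ Y), Vx x := by
      rw [Finset.iSup_union]
    have hsingle : (⨆ o ∈ ({none} : Finset (Option E)),
        o.elim ((⨆ x ∈ X, Vx x) ⊓ (⨆ x ∈ Y, Vx x)) Vx)
        = (⨆ x ∈ X, Vx x) ⊓ (⨆ x ∈ Y, Vx x) := by simp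
    show ((Module.finrank K _ : ℕ) : ℝ) = _
    rw [hsingle, hf, hf, hf]
    rw [hsup] at key
    have : (Module.finrank K ↥(⨆ x ∈ X ∪ Y, Vx x) : ℝ)
        + Module.finrank K ↥((⨆ x ∈ X, Vx x) ⊓ (⨆ x ∈ Y, Vx x))
        = Module.finrank K ↥(⨆ x ∈ X, Vx x) + Module.finrank K ↥(⨆ x ∈ Y, Vx x) := by
      exact_mod_cast key
    linarith
  · have heq : (⨆ o ∈ insert none (X.image some),
        o.elim ((⨆ x ∈ X, Vx x) ⊓ (⨆ x ∈ Y, Vx x)) Vx) = ⨆ x ∈ X, Vx x := by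
      rw [Finset.iSup_insert, Finset.iSup_finset_image]
      exact sup_eq_right.mpr inf_le_left
    show ((Module.finrank K _ : ℕ) : ℝ) = _
    rw [heq, hf]
  · have heq : (⨆ o ∈ insert none (Y.image some),
        o.elim ((⨆ x ∈ X, Vx x) ⊓ (⨆ x ∈ Y, Vx x)) Vx) = ⨆ x ∈ Y, Vx x := by
      rw [Finset.iSup_insert, Finset.iSup_finset_image]
      exact sup_eq_right.mpr inf_le_right
    show ((Module.finrank K _ : ℕ) : ℝ) = _
    rw [heq, hf]
end

section
/- Let (E,f) be a polymatroid with tensor product (E×{1,2,3},g) with U_{2,3}, and X,Y ⊆ E. For the extension f(A∪{z}) = g(X×{1}∪Y×{2}∪A×{3}) - f(X∪Y): for every B ⊆ E and x,y ∈ E, f(B∪{x,z}) + f(B∪{y,z}) ≥ f(B∪{x,y,z}) + f(B∪{z}). -/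
theorem stmt_17 {E : Type*} [DecidableEq E]
    (f : Finset E → ℝ) (g : Finset (E × Fin 3) → ℝ)
    (hf0 : f ∅ = 0)
    (hfmono : ∀ S T : Finset E, S ⊆ T → f S ≤ f T)
    (hfsub : ∀ S T : Finset E, f (S ∪ T) + f (S ∩ T) ≤ f S + f T)
    (hg0 : g ∅ = 0)
    (hgmono : ∀ S T : Finset (E × Fin 3), S ⊆ T → g S ≤ g T)
    (hgsub : ∀ S T : Finset (E × Fin 3), g (S ∪ T) + g (S ∩ T) ≤ g S + g T)
    (htp : ∀ (S : Finset E) (T : Finset (Fin 3)),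
      g (S ×ˢ T) = f S * min (T.card : ℝ) 2)
    (X Y : Finset E)
    (h : Finset (Option E) → ℝ)
    (hh : ∀ S : Finset (Option E), h S =
      if none ∈ S then
        g (X ×ˢ {0} ∪ Y ×ˢ {1} ∪ S.eraseNone ×ˢ {2}) - f (X ∪ Y)
      else f S.eraseNone) :
    ∀ (B : Finset E) (x y : E),
      h (insert (some x) (insert none (B.image some))) +
        h (insert (some y) (insert none (B.image some))) ≥
      h (insert (some x) (insert (some y) (insert none (B.image some)))) +
        h (insert none (B.image some)) := by
  intro B x y
  have ex : ∀ (a : E) (S : Finset E),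
      Finset.eraseNone (insert (some a) (insert none (S.image some))) = insert a S := by
    intro a S
    ext b
    simp [Finset.mem_eraseNone]
  have ex2 : ∀ (a b : E) (S : Finset E),
      Finset.eraseNone (insert (some a) (insert (some b) (insert none (S.image some))))
        = insert a (insert b S) := by
    intro a b S
    ext c
    simp [Finset.mem_eraseNone]
  have ex3 : ∀ (S : Finset E),
      Finset.eraseNone (insert none (S.image some)) = S := by
    intro S
    ext c
    simp [Finset.mem_eraseNone]
  rw [hh, hh, hh, hh, if_pos (by simp), if_pos (by simp), if_pos (by simp),
    if_pos (by simp), ex, ex, ex2, ex3]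
  set W : Finset (E × Fin 3) := X ×ˢ {0} ∪ Y ×ˢ {1} with hW
  have hsub := hgsub (W ∪ (insert x B) ×ˢ ({2} : Finset (Fin 3)))
    (W ∪ (insert y B) ×ˢ ({2} : Finset (Fin 3)))
  have hu : (W ∪ (insert x B) ×ˢ ({2} : Finset (Fin 3))) ∪
      (W ∪ (insert y B) ×ˢ ({2} : Finset (Fin 3)))
      = W ∪ (insert x (insert y B)) ×ˢ ({2} : Finset (Fin 3)) := by
    ext p
    simp [Finset.mem_product]
    tauto
  have hi : W ∪ B ×ˢ ({2} : Finset (Fin 3)) ⊆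
      (W ∪ (insert x B) ×ˢ ({2} : Finset (Fin 3))) ∩
      (W ∪ (insert y B) ×ˢ ({2} : Finset (Fin 3))) := by
    intro p hp
    simp only [Finset.mem_union, Finset.mem_inter, Finset.mem_product,
      Finset.mem_insert] at *
    tauto
  have hmono := hgmono _ _ hi
  rw [hu] at hsub
  linarith
end

section
/- Let (E,f) be a polymatroid with tensor product (E×{1,2,3},g) with U_{2,3}, and X,Y ⊆ E. For the extension f(A∪{z}) = g(X×{1}∪Y×{2}∪A×{3}) - f(X∪Y): for every A ⊆ E, f(A∪{z}) ≥ f(A), i.e., g(X×{1}∪Y×{2}∪A×{3}) ≥ f(X∪Y) + f(A). -/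
theorem stmt_18 {E : Type*} [DecidableEq E]
    (f : Finset E → ℝ) (g : Finset (E × Fin 3) → ℝ)
    (hf0 : f ∅ = 0)
    (hfmono : ∀ S T : Finset E, S ⊆ T → f S ≤ f T)
    (hfsub : ∀ S T : Finset E, f (S ∪ T) + f (S ∩ T) ≤ f S + f T)
    (hg0 : g ∅ = 0)
    (hgmono : ∀ S T : Finset (E × Fin 3), S ⊆ T → g S ≤ g T)
    (hgsub : ∀ S T : Finset (E × Fin 3), g (S ∪ T) + g (S ∩ T) ≤ g S + g T)
    (htp : ∀ (S : Finset E) (T : Finset (Fin 3)),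
      g (S ×ˢ T) = f S * min (T.card : ℝ) 2)
    (X Y : Finset E) :
    ∀ A : Finset E,
      g (X ×ˢ {0} ∪ Y ×ˢ {1} ∪ A ×ˢ {2}) ≥ f (X ∪ Y) + f A := by
  intro A
  -- abbreviation M
  -- product values
  have gM2 : g ((X ∪ Y ∪ A) ×ˢ ({2} : Finset (Fin 3))) = f (X ∪ Y ∪ A) := by
    rw [htp]; norm_num [min_def]
  have gA2 : g (A ×ˢ ({2} : Finset (Fin 3))) = f A := by
    rw [htp]; norm_num [min_def]
  have gY12 : g (Y ×ˢ ({1, 2} : Finset (Fin 3))) = f Y * 2 := by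
    rw [htp]
    norm_num [min_def, show (({1, 2} : Finset (Fin 3)).card) = 2 from by decide]
  have gY012 : g (Y ×ˢ ({0, 1, 2} : Finset (Fin 3))) = f Y * 2 := by
    rw [htp]
    norm_num [min_def, show (({0, 1, 2} : Finset (Fin 3)).card) = 3 from by decide]
  have gM02 : g ((X ∪ Y ∪ A) ×ˢ ({0, 2} : Finset (Fin 3))) = f (X ∪ Y ∪ A) * 2 := by
    rw [htp]
    norm_num [min_def, show (({0, 2} : Finset (Fin 3)).card) = 2 from by decide]
  have gM0 : g ((X ∪ Y ∪ A) ×ˢ ({0} : Finset (Fin 3))) = f (X ∪ Y ∪ A) := by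
    rw [htp]; norm_num [min_def]
  have gN0 : g ((X ∪ Y) ×ˢ ({0} : Finset (Fin 3))) = f (X ∪ Y) := by
    rw [htp]; norm_num [min_def]
  -- Step 1 : uncross with M ×ˢ {2}
  have h1 := hgsub (X ×ˢ {0} ∪ Y ×ˢ {1} ∪ A ×ˢ {2}) ((X ∪ Y ∪ A) ×ˢ ({2} : Finset (Fin 3)))
  have e1u : (X ×ˢ {0} ∪ Y ×ˢ {1} ∪ A ×ˢ {2}) ∪ ((X ∪ Y ∪ A) ×ˢ ({2} : Finset (Fin 3)))
      = X ×ˢ {0} ∪ Y ×ˢ {1} ∪ (X ∪ Y ∪ A) ×ˢ {2} := by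
    ext ⟨e, t⟩; fin_cases t <;> simp <;> tauto
  have e1i : (X ×ˢ {0} ∪ Y ×ˢ {1} ∪ A ×ˢ {2}) ∩ ((X ∪ Y ∪ A) ×ˢ ({2} : Finset (Fin 3)))
      = A ×ˢ ({2} : Finset (Fin 3)) := by
    ext ⟨e, t⟩; fin_cases t <;> simp <;> tauto
  rw [e1u, e1i, gM2, gA2] at h1
  -- Step 2 : uncross with Y ×ˢ {0,1,2} (free)
  have h2 := hgsub (X ×ˢ {0} ∪ Y ×ˢ {1} ∪ (X ∪ Y ∪ A) ×ˢ {2})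
      (Y ×ˢ ({0, 1, 2} : Finset (Fin 3)))
  have e2u : (X ×ˢ {0} ∪ Y ×ˢ {1} ∪ (X ∪ Y ∪ A) ×ˢ {2}) ∪ (Y ×ˢ ({0, 1, 2} : Finset (Fin 3)))
      = (X ∪ Y) ×ˢ {0} ∪ Y ×ˢ {1} ∪ (X ∪ Y ∪ A) ×ˢ {2} := by
    ext ⟨e, t⟩; fin_cases t <;> simp <;> tauto
  have s2 : Y ×ˢ ({1, 2} : Finset (Fin 3)) ⊆
      (X ×ˢ {0} ∪ Y ×ˢ {1} ∪ (X ∪ Y ∪ A) ×ˢ {2}) ∩ (Y ×ˢ ({0, 1, 2} : Finset (Fin 3))) := by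
    intro x hx; obtain ⟨e, t⟩ := x
    fin_cases t <;> simp_all <;> tauto
  have h2m := hgmono _ _ s2
  rw [e2u, gY012] at h2
  rw [gY12] at h2m
  -- Step 3 : uncross with M ×ˢ {0}
  have h3 := hgsub ((X ∪ Y) ×ˢ {0} ∪ Y ×ˢ {1} ∪ (X ∪ Y ∪ A) ×ˢ {2})
      ((X ∪ Y ∪ A) ×ˢ ({0} : Finset (Fin 3)))
  have e3i : ((X ∪ Y) ×ˢ {0} ∪ Y ×ˢ {1} ∪ (X ∪ Y ∪ A) ×ˢ {2}) ∩
      ((X ∪ Y ∪ A) ×ˢ ({0} : Finset (Fin 3))) = (X ∪ Y) ×ˢ ({0} : Finset (Fin 3)) := by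
    ext ⟨e, t⟩; fin_cases t <;> simp <;> tauto
  have s3 : (X ∪ Y ∪ A) ×ˢ ({0, 2} : Finset (Fin 3)) ⊆
      ((X ∪ Y) ×ˢ {0} ∪ Y ×ˢ {1} ∪ (X ∪ Y ∪ A) ×ˢ {2}) ∪
      ((X ∪ Y ∪ A) ×ˢ ({0} : Finset (Fin 3))) := by
    intro x hx; obtain ⟨e, t⟩ := x
    fin_cases t <;> simp_all <;> tauto
  have h3m := hgmono _ _ s3
  rw [e3i, gM0, gN0] at h3
  rw [gM02] at h3m
  linarith
end

section
/- Let (E,f) be a polymatroid with tensor product (E×{1,2,3},g) with U_{2,3}. Then for all A₁,A₂,A₃ ⊆ E, g((A₁∪A₂)×{1} ∪ A₂×{2} ∪ A₃×{3}) ≥ f(A₁∪A₂) + f(A₂∪A₃). -/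
def tri {E : Type*} [DecidableEq E] (S₀ S₁ S₂ : Finset E) : Finset (E × Fin 3) :=
  S₀ ×ˢ {0} ∪ S₁ ×ˢ {1} ∪ S₂ ×ˢ {2}

lemma mem_tri {E : Type*} [DecidableEq E] (S₀ S₁ S₂ : Finset E) (e : E) (i : Fin 3) :
    (e, i) ∈ tri S₀ S₁ S₂ ↔ (e ∈ S₀ ∧ i = 0) ∨ (e ∈ S₁ ∧ i = 1) ∨ (e ∈ S₂ ∧ i = 2) := by
  simp [tri, Finset.mem_union, Finset.mem_product]
  aesop

lemma tri_union {E : Type*} [DecidableEq E] (a b c a' b' c' : Finset E) :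
    tri a b c ∪ tri a' b' c' = tri (a ∪ a') (b ∪ b') (c ∪ c') := by
  ext ⟨e, i⟩
  simp only [Finset.mem_union, mem_tri]
  fin_cases i <;> simp <;> tauto

lemma tri_inter {E : Type*} [DecidableEq E] (a b c a' b' c' : Finset E) :
    tri a b c ∩ tri a' b' c' = tri (a ∩ a') (b ∩ b') (c ∩ c') := by
  ext ⟨e, i⟩
  simp only [Finset.mem_inter, mem_tri]
  fin_cases i <;> simp <;> tauto

lemma tri_subset {E : Type*} [DecidableEq E] {a b c a' b' c' : Finset E}
    (h0 : a ⊆ a') (h1 : b ⊆ b') (h2 : c ⊆ c') : tri a b c ⊆ tri a' b' c' := by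
  intro ⟨e, i⟩ h
  rw [mem_tri] at h ⊢
  rcases h with ⟨h, rfl⟩ | ⟨h, rfl⟩ | ⟨h, rfl⟩
  · exact Or.inl ⟨h0 h, rfl⟩
  · exact Or.inr (Or.inl ⟨h1 h, rfl⟩)
  · exact Or.inr (Or.inr ⟨h2 h, rfl⟩)

lemma tri_0 {E : Type*} [DecidableEq E] (S : Finset E) : tri S ∅ ∅ = S ×ˢ {0} := by
  ext ⟨e, i⟩; rw [mem_tri]; simp [Finset.mem_product]; aesop

lemma tri_2 {E : Type*} [DecidableEq E] (S : Finset E) : tri ∅ ∅ S = S ×ˢ {2} := by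
  ext ⟨e, i⟩; rw [mem_tri]; simp [Finset.mem_product]; aesop

lemma tri_01 {E : Type*} [DecidableEq E] (S : Finset E) : tri S S ∅ = S ×ˢ {0, 1} := by
  ext ⟨e, i⟩; rw [mem_tri]; simp [Finset.mem_product]; aesop

lemma tri_02 {E : Type*} [DecidableEq E] (S : Finset E) : tri S ∅ S = S ×ˢ {0, 2} := by
  ext ⟨e, i⟩; rw [mem_tri]; simp [Finset.mem_product]; aesop

lemma tri_012 {E : Type*} [DecidableEq E] (S : Finset E) : tri S S S = S ×ˢ {0, 1, 2} := by
  ext ⟨e, i⟩; rw [mem_tri]; simp [Finset.mem_product]; fin_cases i <;> aesop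

theorem stmt_19 {E : Type*} [DecidableEq E]
    (f : Finset E → ℝ) (g : Finset (E × Fin 3) → ℝ)
    (hf0 : f ∅ = 0)
    (hfmono : ∀ S T : Finset E, S ⊆ T → f S ≤ f T)
    (hfsub : ∀ S T : Finset E, f (S ∪ T) + f (S ∩ T) ≤ f S + f T)
    (hg0 : g ∅ = 0)
    (hgmono : ∀ S T : Finset (E × Fin 3), S ⊆ T → g S ≤ g T)
    (hgsub : ∀ S T : Finset (E × Fin 3), g (S ∪ T) + g (S ∩ T) ≤ g S + g T)
    (htp : ∀ (S : Finset E) (T : Finset (Fin 3)),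
      g (S ×ˢ T) = f S * min (T.card : ℝ) 2)
    (A₁ A₂ A₃ : Finset E) :
    g ((A₁ ∪ A₂) ×ˢ {0} ∪ A₂ ×ˢ {1} ∪ A₃ ×ˢ {2}) ≥
      f (A₁ ∪ A₂) + f (A₂ ∪ A₃) := by
  set B := A₁ ∪ A₂ with hB
  set C := A₂ ∪ A₃ with hC
  set D := B ∪ C with hD
  set Q := B ∩ C with hQ
  set P := B ∩ A₃ with hP
  -- g-values of rectangles
  have c0 : (({0} : Finset (Fin 3)).card : ℝ) = 1 := by
    rw [show ({0} : Finset (Fin 3)).card = 1 from by decide]; norm_num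
  have c2 : (({2} : Finset (Fin 3)).card : ℝ) = 1 := by
    rw [show ({2} : Finset (Fin 3)).card = 1 from by decide]; norm_num
  have c01 : (({0, 1} : Finset (Fin 3)).card : ℝ) = 2 := by
    rw [show ({0, 1} : Finset (Fin 3)).card = 2 from by decide]; norm_num
  have c02 : (({0, 2} : Finset (Fin 3)).card : ℝ) = 2 := by
    rw [show ({0, 2} : Finset (Fin 3)).card = 2 from by decide]; norm_num
  have c012 : (({0, 1, 2} : Finset (Fin 3)).card : ℝ) = 3 := by
    rw [show ({0, 1, 2} : Finset (Fin 3)).card = 3 from by decide]; norm_num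
  have g0 : ∀ S : Finset E, g (tri S ∅ ∅) = f S := by
    intro S; rw [tri_0, htp, c0]; norm_num
  have g2 : ∀ S : Finset E, g (tri ∅ ∅ S) = f S := by
    intro S; rw [tri_2, htp, c2]; norm_num
  have g01 : ∀ S : Finset E, g (tri S S ∅) = 2 * f S := by
    intro S; rw [tri_01, htp, c01]; norm_num; ring
  have g02 : ∀ S : Finset E, g (tri S ∅ S) = 2 * f S := by
    intro S; rw [tri_02, htp, c02]; norm_num; ring
  have g012 : ∀ S : Finset E, g (tri S S S) = 2 * f S := by
    intro S; rw [tri_012, htp, c012]; norm_num; ring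
  -- the goal set is tri B A₂ A₃
  have hXeq : (A₁ ∪ A₂) ×ˢ ({0} : Finset (Fin 3)) ∪ A₂ ×ˢ {1} ∪ A₃ ×ˢ {2}
      = tri B A₂ A₃ := rfl
  rw [hXeq, ge_iff_le]
  have hA₂B : A₂ ⊆ B := Finset.subset_union_right
  have hPB : P ⊆ B := Finset.inter_subset_left
  have hPA₃ : P ⊆ A₃ := Finset.inter_subset_right
  -- Step 1 : g (tri B Q A₃) ≤ g (tri B A₂ A₃)
  have e1u : B ∪ P = B := Finset.union_eq_left.2 hPB
  have e1m : A₂ ∪ P = Q := by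
    rw [hP, hQ, hB, hC]; ext x
    simp [Finset.mem_union, Finset.mem_inter]; tauto
  have e1d : A₃ ∪ P = A₃ := Finset.union_eq_left.2 hPA₃
  have step1 : g (tri B Q A₃) ≤ g (tri B A₂ A₃) := by
    have h := hgsub (tri B A₂ A₃) (tri P P P)
    rw [tri_union, tri_inter, e1u, e1m, e1d] at h
    have hm : g (tri P ∅ P) ≤ g (tri (B ∩ P) (A₂ ∩ P) (A₃ ∩ P)) := by
      apply hgmono; apply tri_subset
      · rw [Finset.inter_eq_right.2 hPB]
      · exact Finset.empty_subset _
      · rw [Finset.inter_eq_right.2 hPA₃]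
    rw [g012, g02] at *
    linarith [h, hm]
  -- Step 2 : g (tri B Q C) ≤ g (tri B Q A₃)
  have hA₂Q : A₂ ⊆ Q := Finset.subset_inter hA₂B Finset.subset_union_left
  have e2u : B ∪ A₂ = B := Finset.union_eq_left.2 hA₂B
  have e2m : Q ∪ A₂ = Q := Finset.union_eq_left.2 hA₂Q
  have e2d : A₃ ∪ A₂ = C := by rw [hC, Finset.union_comm]
  have step2 : g (tri B Q C) ≤ g (tri B Q A₃) := by
    have h := hgsub (tri B Q A₃) (tri A₂ A₂ A₂)
    rw [tri_union, tri_inter, e2u, e2m, e2d] at h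
    have hm : g (tri A₂ A₂ ∅) ≤ g (tri (B ∩ A₂) (Q ∩ A₂) (A₃ ∩ A₂)) := by
      apply hgmono; apply tri_subset
      · rw [Finset.inter_eq_right.2 hA₂B]
      · rw [Finset.inter_eq_right.2 hA₂Q]
      · exact Finset.empty_subset _
    rw [g012, g01] at *
    linarith [h, hm]
  -- Step 3 : g (tri D Q C) + f B ≤ g (tri B Q C) + f D
  have hBD : B ⊆ D := Finset.subset_union_left
  have hCD : C ⊆ D := Finset.subset_union_right
  have hQD : Q ⊆ D := hQ ▸ Finset.inter_subset_left.trans hBD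
  have step3 : g (tri D Q C) + f B ≤ g (tri B Q C) + f D := by
    have h := hgsub (tri B Q C) (tri D ∅ ∅)
    rw [tri_union, tri_inter] at h
    rw [Finset.union_comm B D, Finset.union_eq_left.2 hBD, Finset.union_empty,
      Finset.union_empty, Finset.inter_eq_left.2 hBD, Finset.inter_empty,
      Finset.inter_empty] at h
    rw [g0, g0] at h
    linarith [h]
  -- Step 4 : g (tri D ∅ C) ≤ g (tri D Q C)
  have step4 : g (tri D ∅ C) ≤ g (tri D Q C) := by
    have h := hgsub (tri D Q C) (tri D (D \ Q) D)
    rw [tri_union, tri_inter] at h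
    rw [Finset.union_self, Finset.union_sdiff_of_subset hQD,
      Finset.union_eq_right.2 hCD, Finset.inter_self,
      Finset.inter_sdiff_self, Finset.inter_eq_left.2 hCD] at h
    have hm : g (tri D (D \ Q) D) ≤ g (tri D D D) := by
      apply hgmono; apply tri_subset (le_refl D) (Finset.sdiff_subset) (le_refl D)
    rw [g012] at *
    linarith [h, hm]
  -- Step 5 : f D + f C ≤ g (tri D ∅ C)
  have step5 : f D + f C ≤ g (tri D ∅ C) := by
    have h := hgsub (tri D ∅ C) (tri ∅ ∅ D)
    rw [tri_union, tri_inter] at h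
    rw [Finset.union_empty, Finset.union_empty, Finset.union_eq_right.2 hCD,
      Finset.inter_empty, Finset.inter_empty, Finset.inter_eq_left.2 hCD] at h
    rw [g02, g2, g2] at h
    linarith [h]
  have hfBD : f B ≤ f D := hfmono _ _ hBD
  linarith [step1, step2, step3, step4, step5]
end
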